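/- arXiv:1904.05641 — 2 statements merged into one kernel-verified Lean document; each statement's English description precedes it below -/
import Mathlib

section
/- Let n ≥ 1, β > 0 and 1 < q < ∞. There exists C > 0 such that for every z ∈ ℝ^n with z ≠ 0, (∫_0^∞ |t^β ∂_t^β W_t(z)|^q dt/t)^{1/q} ≤ C |z|^{-n}, where ∂_t^β is the Weyl derivative in t of the map t ↦ W_t(z) and W_t(z) = (4πt)^{-n/2} e^{-|z|²/(4t)} is the classical heat kernel on ℝ^n. -/
open MeasureTheory Real Set Filter
open scoped ENNReal NNReal

noncomputable section

/-- `N` is a norm on the real normed space `B`. -/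
def IsNormOn {B : Type*} [NormedAddCommGroup B] [NormedSpace ℝ B] (N : B → ℝ) : Prop :=
  (∀ x y : B, N (x + y) ≤ N x + N y) ∧ ∀ (c : ℝ) (x : B), N (c • x) = |c| * N x

/-- `N` is equivalent to the given norm of `B`. -/
def EquivToNorm {B : Type*} [NormedAddCommGroup B] (N : B → ℝ) : Prop :=
  ∃ c₁ c₂ : ℝ, 0 < c₁ ∧ 0 < c₂ ∧ ∀ x : B, c₁ * ‖x‖ ≤ N x ∧ N x ≤ c₂ * ‖x‖

/-- `N` is a `q`-uniformly convex norm: `δ_N(ε) ≥ K ε^q`. -/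
def QUnifConvexNorm {B : Type*} [NormedAddCommGroup B] [NormedSpace ℝ B]
    (q : ℝ) (N : B → ℝ) : Prop :=
  ∃ K : ℝ, 0 < K ∧ ∀ ε : ℝ, 0 < ε → ε < 2 → ∀ a b : B,
    N a = 1 → N b = 1 → N (a - b) = ε → K * ε ^ q ≤ 1 - N ((2⁻¹ : ℝ) • (a + b))

/-- `N` is a `q`-uniformly smooth norm: `ρ_N(t) ≤ K t^q`. -/
def QUnifSmoothNorm {B : Type*} [NormedAddCommGroup B] [NormedSpace ℝ B]
    (q : ℝ) (N : B → ℝ) : Prop :=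
  ∃ K : ℝ, 0 < K ∧ ∀ t : ℝ, 0 < t → ∀ a b : B,
    N a = 1 → N b = 1 → (N (a + t • b) + N (a - t • b)) / 2 - 1 ≤ K * t ^ q

/-- Weyl fractional derivative of order `α`, using `m = ⌊α⌋ + 1` derivatives. -/
def weylDeriv {B : Type*} [NormedAddCommGroup B] [NormedSpace ℝ B]
    (α : ℝ) (φ : ℝ → B) (t : ℝ) : B :=
  (Real.Gamma (((⌊α⌋₊ : ℝ) + 1) - α))⁻¹ •
    ∫ u in Ioi t, ((u - t) ^ (((⌊α⌋₊ : ℝ) + 1) - α - 1)) • iteratedDeriv (⌊α⌋₊ + 1) φ u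

/-- Absolute convergence of the integral defining the Weyl derivative of order `α` at `t`. -/
def WeylIntegrable {B : Type*} [NormedAddCommGroup B] [NormedSpace ℝ B]
    (α : ℝ) (φ : ℝ → B) (t : ℝ) : Prop :=
  IntegrableOn
    (fun u => ((u - t) ^ (((⌊α⌋₊ : ℝ) + 1) - α - 1)) • iteratedDeriv (⌊α⌋₊ + 1) φ u)
    (Ioi t) volume

/-- The classical heat kernel on `ℝⁿ`. -/
def heatKernel (n : ℕ) (t : ℝ) (z : EuclideanSpace ℝ (Fin n)) : ℝ :=
  (4 * Real.pi * t) ^ (-(n : ℝ) / 2) * Real.exp (-‖z‖ ^ 2 / (4 * t))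

/-- The classical heat semigroup on `ℝⁿ`, acting on `B`-valued functions. -/
def heatOp {B : Type*} [NormedAddCommGroup B] [NormedSpace ℝ B] (n : ℕ) (t : ℝ)
    (f : EuclideanSpace ℝ (Fin n) → B) (x : EuclideanSpace ℝ (Fin n)) : B :=
  ∫ y, heatKernel n t (x - y) • f y

/-- The classical Poisson kernel on `ℝⁿ`. -/
def poissonKernelRn (n : ℕ) (t : ℝ) (z : EuclideanSpace ℝ (Fin n)) : ℝ :=
  Real.Gamma (((n : ℝ) + 1) / 2) / Real.pi ^ (((n : ℝ) + 1) / 2) *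
    (t / (t ^ 2 + ‖z‖ ^ 2) ^ (((n : ℝ) + 1) / 2))

/-- The classical Poisson semigroup on `ℝⁿ`, acting on `B`-valued functions. -/
def poissonOp {B : Type*} [NormedAddCommGroup B] [NormedSpace ℝ B] (n : ℕ) (t : ℝ)
    (f : EuclideanSpace ℝ (Fin n) → B) (x : EuclideanSpace ℝ (Fin n)) : B :=
  ∫ y, poissonKernelRn n t (x - y) • f y

/-- The Hermite heat kernel on `ℝⁿ`. -/
def hermiteKernel (n : ℕ) (t : ℝ) (x y : EuclideanSpace ℝ (Fin n)) : ℝ :=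
  Real.pi ^ (-(n : ℝ) / 2) * (Real.exp (-2 * t) / (1 - Real.exp (-4 * t))) ^ ((n : ℝ) / 2) *
    Real.exp (-(1 / 4) *
      (‖x - y‖ ^ 2 * (1 + Real.exp (-2 * t)) / (1 - Real.exp (-2 * t)) +
        ‖x + y‖ ^ 2 * (1 - Real.exp (-2 * t)) / (1 + Real.exp (-2 * t))))

/-- The Hermite heat semigroup on `ℝⁿ`, acting on `B`-valued functions. -/
def hermiteOp {B : Type*} [NormedAddCommGroup B] [NormedSpace ℝ B] (n : ℕ) (t : ℝ)
    (f : EuclideanSpace ℝ (Fin n) → B) (x : EuclideanSpace ℝ (Fin n)) : B :=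
  ∫ y, hermiteKernel n t x y • f y

/-- The one-dimensional Hermite heat kernel. -/
def hermiteKernel1 (t x y : ℝ) : ℝ :=
  Real.pi ^ (-(1 : ℝ) / 2) * (Real.exp (-2 * t) / (1 - Real.exp (-4 * t))) ^ ((1 : ℝ) / 2) *
    Real.exp (-(1 / 4) *
      ((x - y) ^ 2 * (1 + Real.exp (-2 * t)) / (1 - Real.exp (-2 * t)) +
        (x + y) ^ 2 * (1 - Real.exp (-2 * t)) / (1 + Real.exp (-2 * t))))

/-- The modified Bessel function of the first kind of order `β`. -/
def besselI (β z : ℝ) : ℝ :=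
  ∑' m : ℕ, (z / 2) ^ (2 * (m : ℝ) + β) / ((Nat.factorial m : ℝ) * Real.Gamma ((m : ℝ) + β + 1))

/-- The Laguerre heat kernel on `(0,∞)`. -/
def laguerreKernel (β t x y : ℝ) : ℝ :=
  Real.sqrt (2 * Real.exp (-t) / (1 - Real.exp (-2 * t))) *
    Real.sqrt (2 * x * y * Real.exp (-t) / (1 - Real.exp (-2 * t))) *
    besselI β (2 * x * y * Real.exp (-t) / (1 - Real.exp (-2 * t))) *
    Real.exp (-(1 / 2) * (x ^ 2 + y ^ 2) * (1 + Real.exp (-2 * t)) / (1 - Real.exp (-2 * t)))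

/-- The Laguerre heat semigroup on `(0,∞)`, acting on `B`-valued functions. -/
def laguerreOp {B : Type*} [NormedAddCommGroup B] [NormedSpace ℝ B] (β t : ℝ)
    (f : ℝ → B) (x : ℝ) : B :=
  ∫ y in Ioi (0 : ℝ), laguerreKernel β t x y • f y

/-- The Littlewood–Paley `g`-function of order `α` of a curve `φ : (0,∞) → B`. -/
def gCurve {B : Type*} [NormedAddCommGroup B] [NormedSpace ℝ B]
    (q α : ℝ) (φ : ℝ → B) : ℝ≥0∞ :=
  (∫⁻ t in Ioi (0 : ℝ), ENNReal.ofReal ((t ^ α * ‖weylDeriv α φ t‖) ^ q / t)) ^ (1 / q)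

/-- The first-order Littlewood–Paley `g`-function of a curve `φ : (0,∞) → B`. -/
def gOneCurve {B : Type*} [NormedAddCommGroup B] [NormedSpace ℝ B]
    (q : ℝ) (φ : ℝ → B) : ℝ≥0∞ :=
  (∫⁻ t in Ioi (0 : ℝ), ENNReal.ofReal ((t * ‖deriv φ t‖) ^ q / t)) ^ (1 / q)

/-- The Littlewood–Paley function `g^α_{q,W;B}` for the classical heat semigroup. -/
def gHeat {B : Type*} [NormedAddCommGroup B] [NormedSpace ℝ B] (n : ℕ) (q α : ℝ)
    (f : EuclideanSpace ℝ (Fin n) → B) (x : EuclideanSpace ℝ (Fin n)) : ℝ≥0∞ :=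
  gCurve q α (fun t => heatOp n t f x)

/-- The Littlewood–Paley function `g^α_{q,W^H;B}` for the Hermite heat semigroup. -/
def gHermite {B : Type*} [NormedAddCommGroup B] [NormedSpace ℝ B] (n : ℕ) (q α : ℝ)
    (f : EuclideanSpace ℝ (Fin n) → B) (x : EuclideanSpace ℝ (Fin n)) : ℝ≥0∞ :=
  gCurve q α (fun t => hermiteOp n t f x)

/-- The Littlewood–Paley function `g^α_{q,W^{L_β};B}` for the Laguerre heat semigroup. -/
def gLaguerre {B : Type*} [NormedAddCommGroup B] [NormedSpace ℝ B] (β q α : ℝ)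
    (f : ℝ → B) (x : ℝ) : ℝ≥0∞ :=
  gCurve q α (fun t => laguerreOp β t f x)

/-- The area integral `𝒜^α_{q,W;B}` for the classical heat semigroup on `ℝⁿ`. -/
def areaHeat {B : Type*} [NormedAddCommGroup B] [NormedSpace ℝ B] (n : ℕ) (q α : ℝ)
    (f : EuclideanSpace ℝ (Fin n) → B) (x : EuclideanSpace ℝ (Fin n)) : ℝ≥0∞ :=
  (∫⁻ yt in {yt : EuclideanSpace ℝ (Fin n) × ℝ | 0 < yt.2 ∧ ‖yt.1 - x‖ < yt.2},
      ENNReal.ofReal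
        (((yt.2 ^ 2) ^ α * ‖weylDeriv α (fun s => heatOp n s f yt.1) (yt.2 ^ 2)‖) ^ q /
          yt.2 ^ (n + 1))) ^ (1 / q)

/-- The area integral `𝒜^α_{q,W^H;B}` for the Hermite heat semigroup on `ℝⁿ`. -/
def areaHermite {B : Type*} [NormedAddCommGroup B] [NormedSpace ℝ B] (n : ℕ) (q α : ℝ)
    (f : EuclideanSpace ℝ (Fin n) → B) (x : EuclideanSpace ℝ (Fin n)) : ℝ≥0∞ :=
  (∫⁻ yt in {yt : EuclideanSpace ℝ (Fin n) × ℝ | 0 < yt.2 ∧ ‖yt.1 - x‖ < yt.2},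
      ENNReal.ofReal
        (((yt.2 ^ 2) ^ α * ‖weylDeriv α (fun s => hermiteOp n s f yt.1) (yt.2 ^ 2)‖) ^ q /
          yt.2 ^ (n + 1))) ^ (1 / q)

/-- The area integral `𝒜^α_{q,W^{L_β};B}` for the Laguerre heat semigroup on `(0,∞)`. -/
def areaLaguerre {B : Type*} [NormedAddCommGroup B] [NormedSpace ℝ B] (β q α : ℝ)
    (f : ℝ → B) (x : ℝ) : ℝ≥0∞ :=
  (∫⁻ yt in {yt : ℝ × ℝ | 0 < yt.1 ∧ 0 < yt.2 ∧ |yt.1 - x| < yt.2},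
      ENNReal.ofReal
        (((yt.2 ^ 2) ^ α * ‖weylDeriv α (fun s => laguerreOp β s f yt.1) (yt.2 ^ 2)‖) ^ q /
          yt.2 ^ 2)) ^ (1 / q)

/-- Membership in the algebraic tensor product `L^p ⊗ B`. -/
def InLpTensor {X : Type*} [MeasurableSpace X] {B : Type*} [NormedAddCommGroup B]
    [NormedSpace ℝ B] (μ : Measure X) (p : ℝ≥0∞) (f : X → B) : Prop :=
  ∃ (k : ℕ) (φ : Fin k → X → ℝ) (b : Fin k → B),
    (∀ i, MemLp (φ i) p μ) ∧ ∀ x, f x = ∑ i, φ i x • b i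

/-- Membership in the algebraic tensor product `C_c^∞(ℝⁿ) ⊗ B`. -/
def InCcSmoothTensor {B : Type*} [NormedAddCommGroup B] [NormedSpace ℝ B] (n : ℕ)
    (f : EuclideanSpace ℝ (Fin n) → B) : Prop :=
  ∃ (k : ℕ) (φ : Fin k → EuclideanSpace ℝ (Fin n) → ℝ) (b : Fin k → B),
    (∀ i, ContDiff ℝ (⊤ : ℕ∞) (φ i) ∧ HasCompactSupport (φ i)) ∧ ∀ x, f x = ∑ i, φ i x • b i


lemma st10_pow_le_exp (x : ℝ) (hx : 0 ≤ x) (N : ℕ) : x ^ N ≤ (N.factorial : ℝ) * Real.exp x := by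
  have h := Real.sum_le_exp_of_nonneg hx (N + 1)
  have h2 : x ^ N / (N.factorial : ℝ) ≤ Real.exp x := by
    refine le_trans ?_ h
    exact Finset.single_le_sum (f := fun i => x ^ i / (i.factorial : ℝ))
      (fun i _ => by positivity) (Finset.self_mem_range_succ N)
  have hN : (0 : ℝ) < N.factorial := by positivity
  calc x ^ N = (N.factorial : ℝ) * (x ^ N / N.factorial) := by field_simp
  _ ≤ (N.factorial : ℝ) * Real.exp x := by nlinarith [h2]

lemma st10_rpow_mul_exp_le (s : ℝ) (hs : 0 ≤ s) (c : ℝ) (hc : 0 < c) :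
    ∃ C : ℝ, 0 < C ∧ ∀ x : ℝ, 0 ≤ x → x ^ s * Real.exp (-(c * x)) ≤ C := by
  set N := ⌈s⌉₊
  refine ⟨1 + N.factorial / c ^ N, by positivity, fun x hx => ?_⟩
  have hrs : x ^ s ≤ 1 + x ^ N := by
    rcases le_total x 1 with h | h
    · have : x ^ s ≤ 1 := Real.rpow_le_one hx h hs
      nlinarith [pow_nonneg hx N]
    · have h1 : x ^ s ≤ x ^ (N : ℝ) :=
        Real.rpow_le_rpow_of_exponent_le h (Nat.le_ceil s)
      rw [Real.rpow_natCast] at h1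
      linarith
  have hpow : (c * x) ^ N ≤ (N.factorial : ℝ) * Real.exp (c * x) :=
    st10_pow_le_exp _ (by positivity) N
  have hxN : x ^ N ≤ (N.factorial : ℝ) / c ^ N * Real.exp (c * x) := by
    have hcN : (0 : ℝ) < c ^ N := by positivity
    rw [mul_pow] at hpow
    rw [div_mul_eq_mul_div, le_div_iff₀ hcN]
    nlinarith [hpow]
  have hexp : Real.exp (-(c * x)) = (Real.exp (c * x))⁻¹ := by
    rw [Real.exp_neg]
  have hepos : (0 : ℝ) < Real.exp (c * x) := Real.exp_pos _
  have he1 : (1 : ℝ) ≤ Real.exp (c * x) := by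
    have := Real.one_le_exp (by positivity : (0:ℝ) ≤ c * x); linarith
  calc x ^ s * Real.exp (-(c * x)) ≤ (1 + x ^ N) * Real.exp (-(c * x)) := by
        have := Real.exp_pos (-(c * x)); nlinarith [hrs]
  _ = Real.exp (-(c*x)) + x ^ N * Real.exp (-(c*x)) := by ring
  _ ≤ 1 + (N.factorial : ℝ) / c ^ N := by
      have h1 : Real.exp (-(c*x)) ≤ 1 := by
        rw [hexp]; exact inv_le_one_of_one_le₀ he1
      have h2 : x ^ N * Real.exp (-(c*x)) ≤ (N.factorial : ℝ) / c ^ N := by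
        have h3 := mul_le_mul_of_nonneg_right hxN (Real.exp_pos (-(c*x))).le
        rwa [mul_assoc, ← Real.exp_add, add_neg_cancel, Real.exp_zero, mul_one] at h3
      have h4 : 0 ≤ x ^ N * Real.exp (-(c*x)) := by positivity
      linarith

lemma st10_poly_bound (p : Polynomial ℝ) :
    ∃ C : ℝ, 0 < C ∧ ∀ x : ℝ, 0 ≤ x → |p.eval x| ≤ C * Real.exp (x / 2) := by
  classical
  set d := p.natDegree
  refine ⟨(∑ i ∈ Finset.range (d + 1), |p.coeff i| * 2 ^ i * (i.factorial : ℝ)) + 1,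
    by positivity, fun x hx => ?_⟩
  have hev : p.eval x = ∑ i ∈ Finset.range (d + 1), p.coeff i * x ^ i :=
    Polynomial.eval_eq_sum_range (p := p) x
  have hexp : (0 : ℝ) < Real.exp (x / 2) := Real.exp_pos _
  calc |p.eval x| ≤ ∑ i ∈ Finset.range (d + 1), |p.coeff i * x ^ i| := by
        rw [hev]; exact Finset.abs_sum_le_sum_abs _ _
  _ ≤ ∑ i ∈ Finset.range (d + 1), (|p.coeff i| * 2 ^ i * (i.factorial : ℝ)) * Real.exp (x / 2) := by
      refine Finset.sum_le_sum fun i _ => ?_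
      rw [abs_mul, abs_pow, abs_of_nonneg hx]
      have hxi : x ^ i ≤ 2 ^ i * ((i.factorial : ℝ) * Real.exp (x / 2)) := by
        have h := st10_pow_le_exp (x / 2) (by linarith) i
        have : x ^ i = 2 ^ i * (x / 2) ^ i := by rw [← mul_pow]; ring_nf
        rw [this]
        have h2 : (0:ℝ) ≤ 2 ^ i := by positivity
        nlinarith [h, h2]
      have := abs_nonneg (p.coeff i)
      nlinarith [hxi, this]
  _ = (∑ i ∈ Finset.range (d + 1), |p.coeff i| * 2 ^ i * (i.factorial : ℝ)) * Real.exp (x / 2) := by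
      rw [← Finset.sum_mul]
  _ ≤ _ := by nlinarith [hexp, Finset.sum_nonneg (fun i (_ : i ∈ Finset.range (d+1)) =>
        by positivity : ∀ i ∈ Finset.range (d+1), (0:ℝ) ≤ |p.coeff i| * 2 ^ i * (i.factorial : ℝ))]

lemma st10_deriv_formula (e c : ℝ) (k : ℕ) :
    ∃ p : Polynomial ℝ, ∀ a t : ℝ, 0 < t →
      iteratedDeriv k (fun s => c * s ^ e * Real.exp (-(a / s))) t
        = c * t ^ (e - k) * p.eval (a / t) * Real.exp (-(a / t)) := by
  induction k with
  | zero =>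
    refine ⟨1, fun a t ht => ?_⟩
    simp [iteratedDeriv_zero]
  | succ k IH =>
    obtain ⟨p, hp⟩ := IH
    refine ⟨Polynomial.C (e - k) * p + Polynomial.X * p - Polynomial.X * p.derivative,
      fun a t ht => ?_⟩
    rw [iteratedDeriv_succ]
    have hev : iteratedDeriv k (fun s => c * s ^ e * Real.exp (-(a / s)))
        =ᶠ[nhds t] fun u => c * u ^ (e - k) * p.eval (a / u) * Real.exp (-(a / u)) := by
      filter_upwards [Ioi_mem_nhds ht] with u hu
      exact hp a u hu
    rw [hev.deriv_eq]
    have h2 : HasDerivAt (fun u : ℝ => a / u) (-(a / t ^ 2)) t := by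
      have := (hasDerivAt_inv ht.ne').const_mul a
      simpa [div_eq_mul_inv, mul_comm] using this
    have h1 : HasDerivAt (fun u : ℝ => u ^ (e - k)) ((e - k) * t ^ (e - k - 1)) t :=
      Real.hasDerivAt_rpow_const (Or.inl ht.ne')
    have h3 : HasDerivAt (fun u : ℝ => p.eval (a / u))
        (p.derivative.eval (a / t) * -(a / t ^ 2)) t :=
      (p.hasDerivAt (a / t)).comp t h2
    have h4 : HasDerivAt (fun u : ℝ => Real.exp (-(a / u)))
        (Real.exp (-(a / t)) * (a / t ^ 2)) t := by
      have := (Real.hasDerivAt_exp (-(a / t))).comp t h2.neg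
      simpa [Function.comp_def] using this
    have H := ((h1.const_mul c).mul h3).mul h4
    rw [show (fun u => c * u ^ (e - k) * p.eval (a / u) * Real.exp (-(a / u))) =
      ((fun y => c * y ^ (e - k)) * fun u => p.eval (a / u)) * fun u => Real.exp (-(a / u))
      from rfl, H.deriv]
    have hA : t ^ (e - k) = t ^ (e - k - 1) * t := by
      rw [← Real.rpow_add_one ht.ne']; ring_nf
    have hcast : e - ((k : ℝ) + 1) = e - k - 1 := by ring
    have hE : e - ((k + 1 : ℕ) : ℝ) = e - k - 1 := by push_cast; ring
    rw [hE]
    simp only [Polynomial.eval_sub, Polynomial.eval_add, Polynomial.eval_mul,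
      Polynomial.eval_C, Polynomial.eval_X, Pi.mul_apply]
    rw [hA]
    field_simp
    ring

lemma st10_kernel_deriv_bound (n m : ℕ) :
    ∃ CK : ℝ, 0 < CK ∧ ∀ a t : ℝ, 0 < a → 0 < t →
      |iteratedDeriv m (fun s => (4 * π) ^ (-(n : ℝ) / 2) * s ^ (-(n : ℝ) / 2) *
          Real.exp (-(a / s))) t|
        ≤ CK * t ^ (-(n : ℝ) / 2 - m) * Real.exp (-(a / (2 * t))) := by
  obtain ⟨p, hp⟩ := st10_deriv_formula (-(n : ℝ) / 2) ((4 * π) ^ (-(n : ℝ) / 2)) m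
  obtain ⟨Cp, hCp, hCb⟩ := st10_poly_bound p
  have hc : (0 : ℝ) < (4 * π) ^ (-(n : ℝ) / 2) :=
    Real.rpow_pos_of_pos (by positivity) _
  refine ⟨(4 * π) ^ (-(n : ℝ) / 2) * Cp, by positivity, fun a t ha ht => ?_⟩
  rw [hp a t ht]
  have hx : (0 : ℝ) ≤ a / t := by positivity
  have htp : (0 : ℝ) < t ^ (-(n : ℝ) / 2 - m) := Real.rpow_pos_of_pos ht _
  have key : |p.eval (a / t)| * Real.exp (-(a / t)) ≤ Cp * Real.exp (-(a / (2 * t))) := by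
    have h1 := hCb (a / t) hx
    have h2 : Real.exp (a / t / 2) * Real.exp (-(a / t)) = Real.exp (-(a / (2 * t))) := by
      rw [← Real.exp_add]; congr 1; field_simp; ring
    have h3 := mul_le_mul_of_nonneg_right h1 (Real.exp_pos (-(a / t))).le
    rw [mul_assoc, h2] at h3
    exact h3
  rw [abs_mul, abs_mul, abs_of_pos (mul_pos hc htp)]
  calc (4 * π) ^ (-(n : ℝ) / 2) * t ^ (-(n : ℝ) / 2 - m) * |p.eval (a / t)| *
        |Real.exp (-(a / t))|
      = (4 * π) ^ (-(n : ℝ) / 2) * t ^ (-(n : ℝ) / 2 - m) *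
        (|p.eval (a / t)| * Real.exp (-(a / t))) := by
        rw [abs_of_pos (Real.exp_pos _)]; ring
  _ ≤ (4 * π) ^ (-(n : ℝ) / 2) * t ^ (-(n : ℝ) / 2 - m) *
        (Cp * Real.exp (-(a / (2 * t)))) := by
        have : (0:ℝ) ≤ (4 * π) ^ (-(n : ℝ) / 2) * t ^ (-(n : ℝ) / 2 - m) := by positivity
        exact mul_le_mul_of_nonneg_left key this
  _ = (4 * π) ^ (-(n : ℝ) / 2) * Cp * t ^ (-(n : ℝ) / 2 - m) *
        Real.exp (-(a / (2 * t))) := by ring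

lemma st10_congr (n : ℕ) (z : EuclideanSpace ℝ (Fin n)) (m : ℕ) (u : ℝ) (hu : 0 < u) :
    iteratedDeriv m (fun s => heatKernel n s z) u
      = iteratedDeriv m (fun s => (4 * π) ^ (-(n : ℝ) / 2) * s ^ (-(n : ℝ) / 2) *
          Real.exp (-(‖z‖ ^ 2 / 4 / s))) u := by
  refine Filter.EventuallyEq.iteratedDeriv_eq m ?_
  filter_upwards [Ioi_mem_nhds hu] with s hs
  have hs' : (0 : ℝ) < s := hs
  unfold heatKernel
  rw [show (4 * π * s) = (4 * π) * s by ring,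
    Real.mul_rpow (by positivity) hs'.le]
  congr 1
  rw [div_div, neg_div]

lemma st10_exp_le (y : ℝ) (hy : 0 < y) (N : ℕ) :
    Real.exp (-y) ≤ (N.factorial : ℝ) / y ^ N := by
  have h1 : y ^ N ≤ (N.factorial : ℝ) * Real.exp y := st10_pow_le_exp y hy.le N
  have hyN : (0 : ℝ) < y ^ N := by positivity
  rw [le_div_iff₀ hyN, Real.exp_neg]
  have hey : (0 : ℝ) < Real.exp y := Real.exp_pos y
  rw [inv_mul_le_iff₀ hey] at *
  nlinarith [h1]

lemma st10_T (σ : ℝ) (hσ : 0 < σ) :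
    ∃ CT : ℝ, 0 < CT ∧ ∀ b : ℝ, 0 < b →
      IntegrableOn (fun u => u ^ (-σ - 1) * Real.exp (-(b / u))) (Ioi (0 : ℝ)) ∧
      ∫ u in Ioi (0 : ℝ), u ^ (-σ - 1) * Real.exp (-(b / u)) ≤ CT * b ^ (-σ) := by
  set N : ℕ := ⌈σ⌉₊ + 1 with hN
  have hNσ : σ < (N : ℝ) := by
    have := Nat.le_ceil σ
    push_cast [hN]
    linarith
  have hNσ' : (0:ℝ) < (N : ℝ) - σ := by linarith
  refine ⟨(N.factorial : ℝ) / ((N : ℝ) - σ) + σ⁻¹, by positivity, fun b hb => ?_⟩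
  set f : ℝ → ℝ := fun u => u ^ (-σ - 1) * Real.exp (-(b / u)) with hf
  have hmeas : Measurable f := by rw [hf]; fun_prop
  -- piece 1 : Ioc 0 b
  set g1 : ℝ → ℝ := fun u => (N.factorial : ℝ) * b ^ (-(N : ℝ)) * u ^ ((N : ℝ) - σ - 1) with hg1
  have hexp1 : (-1 : ℝ) < (N : ℝ) - σ - 1 := by linarith
  have hint1 : IntegrableOn g1 (Ioc 0 b) := by
    have := (intervalIntegral.intervalIntegrable_rpow' (a := 0) (b := b) hexp1)
    rw [intervalIntegrable_iff_integrableOn_Ioc_of_le hb.le] at this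
    exact this.const_mul _
  have hpt1 : ∀ u ∈ Ioc (0 : ℝ) b, f u ≤ g1 u := by
    intro u hu
    have hu0 : (0 : ℝ) < u := hu.1
    have hy : (0 : ℝ) < b / u := div_pos hb hu0
    have h2 : Real.exp (-(b / u)) ≤ (N.factorial : ℝ) * u ^ N / b ^ N := by
      have := st10_exp_le (b / u) hy N
      rw [div_pow, div_div_eq_mul_div] at this
      exact this
    have hup : (0 : ℝ) < u ^ (-σ - 1) := Real.rpow_pos_of_pos hu0 _
    have h3 : f u ≤ u ^ (-σ - 1) * ((N.factorial : ℝ) * u ^ N / b ^ N) :=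
      mul_le_mul_of_nonneg_left h2 hup.le
    refine h3.trans_eq ?_
    have hbN : b ^ (-(N : ℝ)) = (b ^ N)⁻¹ := by
      rw [Real.rpow_neg hb.le, Real.rpow_natCast]
    have huN : u ^ ((N : ℝ) - σ - 1) = u ^ N * u ^ (-σ - 1) := by
      rw [show (N : ℝ) - σ - 1 = (N : ℝ) + (-σ - 1) by ring, Real.rpow_add hu0,
        Real.rpow_natCast]
    rw [hg1]
    simp only
    rw [hbN, huN]
    ring
  have hval1 : ∫ u in Ioc (0 : ℝ) b, g1 u
      = (N.factorial : ℝ) / ((N : ℝ) - σ) * b ^ (-σ) := by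
    rw [hg1]
    simp only
    rw [integral_const_mul]
    have : ∫ u in Ioc (0 : ℝ) b, u ^ ((N : ℝ) - σ - 1)
        = b ^ ((N : ℝ) - σ) / ((N : ℝ) - σ) := by
      rw [← intervalIntegral.integral_of_le hb.le,
        integral_rpow (Or.inl hexp1)]
      rw [show (N : ℝ) - σ - 1 + 1 = (N : ℝ) - σ by ring,
        Real.zero_rpow (by linarith : (N : ℝ) - σ ≠ 0)]
      ring
    rw [this]
    rw [show (N.factorial : ℝ) * b ^ (-(N : ℝ)) * (b ^ ((N : ℝ) - σ) / ((N : ℝ) - σ))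
        = (N.factorial : ℝ) / ((N : ℝ) - σ) * (b ^ (-(N : ℝ)) * b ^ ((N : ℝ) - σ)) by ring,
      ← Real.rpow_add hb]
    ring_nf
  have hintf1 : IntegrableOn f (Ioc 0 b) := by
    refine Integrable.mono' hint1 hmeas.aestronglyMeasurable.restrict ?_
    rw [ae_restrict_iff' measurableSet_Ioc]
    refine ae_of_all _ fun u hu => ?_
    have hu0 : (0 : ℝ) < u := hu.1
    have : (0 : ℝ) ≤ f u := by
      have := Real.rpow_pos_of_pos hu0 (-σ - 1)
      have := Real.exp_pos (-(b / u))
      rw [hf]; positivity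
    rw [Real.norm_eq_abs, abs_of_nonneg this]
    exact hpt1 u hu
  have hb1 : ∫ u in Ioc (0 : ℝ) b, f u
      ≤ (N.factorial : ℝ) / ((N : ℝ) - σ) * b ^ (-σ) :=
    (setIntegral_mono_on hintf1 hint1 measurableSet_Ioc hpt1).trans_eq hval1
  -- piece 2 : Ioi b
  have hint2 : IntegrableOn (fun u : ℝ => u ^ (-σ - 1)) (Ioi b) :=
    integrableOn_Ioi_rpow_of_lt (by linarith) hb
  have hpt2 : ∀ u ∈ Ioi b, f u ≤ u ^ (-σ - 1) := by
    intro u hu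
    have hu0 : (0 : ℝ) < u := hb.trans hu
    have hup : (0 : ℝ) < u ^ (-σ - 1) := Real.rpow_pos_of_pos hu0 _
    have he : Real.exp (-(b / u)) ≤ 1 := by
      rw [Real.exp_le_one_iff]
      have : (0 : ℝ) < b / u := div_pos hb hu0
      linarith
    calc f u ≤ u ^ (-σ - 1) * 1 := mul_le_mul_of_nonneg_left he hup.le
    _ = u ^ (-σ - 1) := mul_one _
  have hintf2 : IntegrableOn f (Ioi b) := by
    refine Integrable.mono' hint2 hmeas.aestronglyMeasurable.restrict ?_
    rw [ae_restrict_iff' measurableSet_Ioi]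
    refine ae_of_all _ fun u hu => ?_
    have hu0 : (0 : ℝ) < u := hb.trans hu
    have : (0 : ℝ) ≤ f u := by
      have := Real.rpow_pos_of_pos hu0 (-σ - 1)
      have := Real.exp_pos (-(b / u))
      rw [hf]; positivity
    rw [Real.norm_eq_abs, abs_of_nonneg this]
    exact hpt2 u hu
  have hval2 : ∫ u in Ioi b, (u : ℝ) ^ (-σ - 1) = σ⁻¹ * b ^ (-σ) := by
    rw [integral_Ioi_rpow_of_lt (by linarith) hb,
      show -σ - 1 + 1 = -σ by ring]
    field_simp
  have hb2 : ∫ u in Ioi b, f u ≤ σ⁻¹ * b ^ (-σ) :=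
    (setIntegral_mono_on hintf2 hint2 measurableSet_Ioi hpt2).trans_eq hval2
  -- combine
  have hunion : Ioc (0 : ℝ) b ∪ Ioi b = Ioi (0 : ℝ) := Ioc_union_Ioi_eq_Ioi hb.le
  have hint : IntegrableOn f (Ioi (0 : ℝ)) := by
    rw [← hunion]; exact hintf1.union hintf2
  refine ⟨hint, ?_⟩
  have hsplit : ∫ u in Ioi (0 : ℝ), f u
      = (∫ u in Ioc (0 : ℝ) b, f u) + ∫ u in Ioi b, f u := by
    rw [← hunion, setIntegral_union (Ioc_disjoint_Ioi le_rfl) measurableSet_Ioi hintf1 hintf2]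
  rw [hsplit]
  have := add_le_add hb1 hb2
  linarith [this]

lemma st10_pointwise (n : ℕ) (β : ℝ) (hβ : 0 < β) :
    ∃ C1 : ℝ, 0 < C1 ∧ ∀ z : EuclideanSpace ℝ (Fin n), z ≠ 0 → ∀ t : ℝ, 0 < t →
      |weylDeriv β (fun s => heatKernel n s z) t| ≤ C1 * t ^ (-(β + (n : ℝ) / 2)) ∧
      |weylDeriv β (fun s => heatKernel n s z) t| ≤ C1 * (‖z‖ ^ 2 : ℝ) ^ (-(β + (n : ℝ) / 2)) := by
  set m : ℕ := ⌊β⌋₊ + 1 with hm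
  set γ : ℝ := ((⌊β⌋₊ : ℝ) + 1) - β with hγ
  have hγ0 : 0 < γ := by
    have := Nat.lt_floor_add_one β
    rw [hγ]; push_cast; linarith
  have hγ1 : γ ≤ 1 := by
    have := Nat.floor_le hβ.le
    rw [hγ]; push_cast; linarith
  have hmγ : (m : ℝ) = β + γ := by rw [hm, hγ]; push_cast; ring
  set σ : ℝ := β + (n : ℝ) / 2 with hσdef
  have hσ : 0 < σ := by
    have hn2 : (0:ℝ) ≤ (n:ℝ)/2 := by positivity
    rw [hσdef]; linarith
  have hΓ : 0 < Real.Gamma γ := Real.Gamma_pos_of_pos hγ0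
  obtain ⟨CK, hCK, hK⟩ := st10_kernel_deriv_bound n m
  obtain ⟨CT, hCT, hT⟩ := st10_T σ hσ
  obtain ⟨Cx, hCx, hX⟩ := st10_rpow_mul_exp_le σ hσ.le 2⁻¹ (by norm_num)
  have h8 : (0:ℝ) < (8:ℝ) ^ σ := Real.rpow_pos_of_pos (by norm_num) σ
  refine ⟨(Real.Gamma γ)⁻¹ * CK * (1/γ + 2/σ)
      + (Real.Gamma γ)⁻¹ * (CK * Cx / γ + 2 * CK * CT) * (8:ℝ) ^ σ + 1,
    by positivity, fun z hz t ht => ?_⟩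
  have hz0 : (0:ℝ) < ‖z‖ := norm_pos_iff.mpr hz
  set b : ℝ := ‖z‖ ^ 2 / 8 with hbdef
  have hb : 0 < b := by rw [hbdef]; positivity
  set φ : ℝ → ℝ := fun s => heatKernel n s z with hφ
  -- bound on the iterated derivative
  have hDbound : ∀ u : ℝ, 0 < u →
      |iteratedDeriv m φ u| ≤ CK * u ^ (-(n:ℝ)/2 - m) * Real.exp (-(b/u)) := by
    intro u hu
    rw [hφ]
    rw [st10_congr n z m u hu]
    have h := hK (‖z‖ ^ 2 / 4) u (by positivity) hu
    have heq : ‖z‖ ^ 2 / 4 / (2 * u) = b / u := by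
      rw [hbdef]; ring
    rwa [heq] at h
  -- the dominating function
  set g : ℝ → ℝ :=
    fun u => (u - t) ^ (γ - 1) * (CK * u ^ (-(n:ℝ)/2 - m) * Real.exp (-(b/u))) with hg
  have hgmeas : Measurable g := by rw [hg]; fun_prop
  have hEm : -(n:ℝ)/2 - m ≤ 0 := by
    have h1 : (0:ℝ) ≤ (n:ℝ)/2 := by positivity
    have h2 : (0:ℝ) ≤ (m:ℝ) := by positivity
    linarith
  have ht2 : t ≤ 2 * t := by linarith
  have hgnonneg : ∀ u : ℝ, t < u → 0 ≤ g u := by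
    intro u hu
    have h1 : (0:ℝ) ≤ (u - t) ^ (γ - 1) := Real.rpow_nonneg (by linarith) _
    have h2 : (0:ℝ) < u ^ (-(n:ℝ)/2 - m) := Real.rpow_pos_of_pos (ht.trans hu) _
    have h3 := Real.exp_pos (-(b/u))
    rw [hg]; positivity
  -- piece 1 : Ioc t (2t)
  set M1 : ℝ := CK * t ^ (-(n:ℝ)/2 - m) * Real.exp (-(b/(2*t))) with hM1
  have hM1pos : 0 < M1 := by
    have := Real.rpow_pos_of_pos ht (-(n:ℝ)/2 - m)
    have := Real.exp_pos (-(b/(2*t)))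
    rw [hM1]; positivity
  have hpt1 : ∀ u ∈ Ioc t (2*t), g u ≤ (u - t) ^ (γ - 1) * M1 := by
    intro u hu
    have hu0 : 0 < u := ht.trans hu.1
    have e1 : u ^ (-(n:ℝ)/2 - m) ≤ t ^ (-(n:ℝ)/2 - m) :=
      Real.rpow_le_rpow_of_nonpos ht hu.1.le hEm
    have e2 : Real.exp (-(b/u)) ≤ Real.exp (-(b/(2*t))) := by
      apply Real.exp_le_exp.mpr
      have : b / (2*t) ≤ b / u := div_le_div_of_nonneg_left hb.le hu0 hu.2
      linarith
    have e3 : CK * u ^ (-(n:ℝ)/2 - m) * Real.exp (-(b/u)) ≤ M1 := by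
      rw [hM1]
      have hue : 0 ≤ Real.exp (-(b/u)) := (Real.exp_pos _).le
      have htp : 0 ≤ t ^ (-(n:ℝ)/2 - m) := (Real.rpow_pos_of_pos ht _).le
      have hmm := mul_le_mul e1 e2 hue htp
      calc CK * u ^ (-(n:ℝ)/2 - m) * Real.exp (-(b/u))
          = CK * (u ^ (-(n:ℝ)/2 - m) * Real.exp (-(b/u))) := by ring
      _ ≤ CK * (t ^ (-(n:ℝ)/2 - m) * Real.exp (-(b/(2*t)))) :=
          mul_le_mul_of_nonneg_left hmm hCK.le
      _ = CK * t ^ (-(n:ℝ)/2 - m) * Real.exp (-(b/(2*t))) := by ring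
    have h1 : (0:ℝ) ≤ (u - t) ^ (γ - 1) := Real.rpow_nonneg (by linarith [hu.1]) _
    rw [hg]
    exact mul_le_mul_of_nonneg_left e3 h1
  have hint_h1 : IntegrableOn (fun u => (u - t) ^ (γ - 1) * M1) (Ioc t (2*t)) := by
    have base : IntervalIntegrable (fun x : ℝ => x ^ (γ - 1)) volume 0 t :=
      intervalIntegral.intervalIntegrable_rpow' (by linarith)
    have shifted := base.comp_sub_right t
    rw [zero_add] at shifted
    have shifted' : IntervalIntegrable (fun x : ℝ => (x - t) ^ (γ - 1)) volume t (2*t) := by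
      have : t + t = 2 * t := by ring
      rwa [this] at shifted
    rw [intervalIntegrable_iff_integrableOn_Ioc_of_le ht2] at shifted'
    exact shifted'.mul_const _
  have hval1 : ∫ u in Ioc t (2*t), (u - t) ^ (γ - 1) * M1 = t ^ γ / γ * M1 := by
    rw [integral_mul_const]
    congr 1
    rw [← intervalIntegral.integral_of_le ht2]
    have := intervalIntegral.integral_comp_sub_right (a := t) (b := 2*t)
      (fun x : ℝ => x ^ (γ - 1)) t
    rw [this]
    have h1 : t - t = 0 := by ring
    have h2 : 2 * t - t = t := by ring
    rw [h1, h2, integral_rpow (Or.inl (by linarith : (-1:ℝ) < γ - 1))]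
    rw [show γ - 1 + 1 = γ by ring, Real.zero_rpow hγ0.ne']
    ring
  have hg_int1 : IntegrableOn g (Ioc t (2*t)) := by
    refine Integrable.mono' hint_h1 hgmeas.aestronglyMeasurable.restrict ?_
    rw [ae_restrict_iff' measurableSet_Ioc]
    refine ae_of_all _ fun u hu => ?_
    rw [Real.norm_eq_abs, abs_of_nonneg (hgnonneg u hu.1)]
    exact hpt1 u hu
  -- piece 2 : Ioi (2t)
  set h2fun : ℝ → ℝ := fun u => 2 * CK * (u ^ (-σ - 1) * Real.exp (-(b/u))) with hh2
  have hpt2 : ∀ u ∈ Ioi (2*t), g u ≤ h2fun u := by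
    intro u hu
    have hu2t : 2 * t < u := hu
    have hu0 : 0 < u := by linarith
    have e1 : (u - t) ^ (γ - 1) ≤ 2 * u ^ (γ - 1) := by
      have step1 : (u - t) ^ (γ - 1) ≤ (u / 2) ^ (γ - 1) := by
        refine Real.rpow_le_rpow_of_nonpos (by linarith) (by linarith) (by linarith)
      have step2 : (u / 2) ^ (γ - 1) = u ^ (γ - 1) * ((2:ℝ) ^ (1 - γ)) := by
        rw [Real.div_rpow hu0.le (by norm_num : (0:ℝ) ≤ 2)]
        rw [show (1:ℝ) - γ = -(γ-1) by ring, Real.rpow_neg (by norm_num : (0:ℝ) ≤ 2)]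
        ring
      have step3 : (2:ℝ) ^ (1 - γ) ≤ 2 := by
        have := Real.rpow_le_rpow_of_exponent_le (by norm_num : (1:ℝ) ≤ 2)
          (by linarith : 1 - γ ≤ 1)
        rwa [Real.rpow_one] at this
      have hun : (0:ℝ) ≤ u ^ (γ - 1) := (Real.rpow_pos_of_pos hu0 _).le
      calc (u - t) ^ (γ - 1) ≤ u ^ (γ - 1) * ((2:ℝ) ^ (1 - γ)) := step1.trans_eq step2
      _ ≤ u ^ (γ - 1) * 2 := mul_le_mul_of_nonneg_left step3 hun
      _ = 2 * u ^ (γ - 1) := by ring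
    have e2 : (0:ℝ) ≤ CK * u ^ (-(n:ℝ)/2 - m) * Real.exp (-(b/u)) := by
      have := Real.rpow_pos_of_pos hu0 (-(n:ℝ)/2 - m)
      have := Real.exp_pos (-(b/u))
      positivity
    have key : u ^ (γ - 1) * u ^ (-(n:ℝ)/2 - m) = u ^ (-σ - 1) := by
      rw [← Real.rpow_add hu0]
      congr 1
      rw [hσdef, hmγ]
      ring
    calc g u ≤ (2 * u ^ (γ - 1)) * (CK * u ^ (-(n:ℝ)/2 - m) * Real.exp (-(b/u))) := by
          rw [hg]; exact mul_le_mul_of_nonneg_right e1 e2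
    _ = 2 * CK * (u ^ (γ - 1) * u ^ (-(n:ℝ)/2 - m) * Real.exp (-(b/u))) := by ring
    _ = h2fun u := by rw [key]
  have hTint : IntegrableOn (fun u : ℝ => u ^ (-σ - 1) * Real.exp (-(b/u))) (Ioi (0:ℝ)) :=
    (hT b hb).1
  have hint_h2 : IntegrableOn h2fun (Ioi (2*t)) := by
    have := (hTint.mono_set (Ioi_subset_Ioi (by linarith : (0:ℝ) ≤ 2*t)))
    exact this.const_mul _
  have hg_int2 : IntegrableOn g (Ioi (2*t)) := by
    refine Integrable.mono' hint_h2 hgmeas.aestronglyMeasurable.restrict ?_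
    rw [ae_restrict_iff' measurableSet_Ioi]
    refine ae_of_all _ fun u hu => ?_
    have hut : t < u := by have : 2*t < u := hu; linarith
    rw [Real.norm_eq_abs, abs_of_nonneg (hgnonneg u hut)]
    exact hpt2 u hu
  have hunion : Ioc t (2*t) ∪ Ioi (2*t) = Ioi t := Ioc_union_Ioi_eq_Ioi ht2
  have hg_int : IntegrableOn g (Ioi t) := by
    rw [← hunion]; exact hg_int1.union hg_int2
  -- the weyl derivative bound
  have hW : |weylDeriv β φ t| ≤ (Real.Gamma γ)⁻¹ * ∫ u in Ioi t, g u := by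
    unfold weylDeriv
    rw [smul_eq_mul, abs_mul, abs_of_pos (inv_pos.mpr hΓ)]
    refine mul_le_mul_of_nonneg_left ?_ (inv_pos.mpr hΓ).le
    rw [← Real.norm_eq_abs]
    refine norm_integral_le_of_norm_le hg_int ?_
    rw [ae_restrict_iff' measurableSet_Ioi]
    refine ae_of_all _ fun u hu => ?_
    have hut : t < u := hu
    have hu0 : 0 < u := ht.trans hut
    rw [smul_eq_mul, Real.norm_eq_abs, abs_mul,
      abs_of_nonneg (Real.rpow_nonneg (by linarith : (0:ℝ) ≤ u - t) _)]
    rw [hg]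
    exact mul_le_mul_of_nonneg_left (hDbound u hu0)
      (Real.rpow_nonneg (by linarith) _)
  -- splitting
  have hsplit : ∫ u in Ioi t, g u
      = (∫ u in Ioc t (2*t), g u) + ∫ u in Ioi (2*t), g u := by
    rw [← hunion, setIntegral_union (Ioc_disjoint_Ioi le_rfl) measurableSet_Ioi
      hg_int1 hg_int2]
  have hI1 : ∫ u in Ioc t (2*t), g u ≤ t ^ γ / γ * M1 :=
    (setIntegral_mono_on hg_int1 hint_h1 measurableSet_Ioc hpt1).trans_eq hval1
  have hI2 : ∫ u in Ioi (2*t), g u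
      ≤ 2 * CK * ∫ u in Ioi (2*t), u ^ (-σ - 1) * Real.exp (-(b/u)) := by
    have step := setIntegral_mono_on hg_int2 hint_h2 measurableSet_Ioi hpt2
    rw [hh2] at step
    rwa [integral_const_mul] at step
  -- tail bounds
  have hTa : ∫ u in Ioi (2*t), u ^ (-σ - 1) * Real.exp (-(b/u)) ≤ t ^ (-σ) / σ := by
    have h2t : (0:ℝ) < 2*t := by linarith
    have int2 : IntegrableOn (fun u : ℝ => u ^ (-σ - 1)) (Ioi (2*t)) :=
      integrableOn_Ioi_rpow_of_lt (by linarith) h2t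
    have step1 : ∫ u in Ioi (2*t), u ^ (-σ - 1) * Real.exp (-(b/u))
        ≤ ∫ u in Ioi (2*t), u ^ (-σ - 1) := by
      refine setIntegral_mono_on
        (hTint.mono_set (Ioi_subset_Ioi h2t.le)) int2 measurableSet_Ioi fun u hu => ?_
      have hu0 : (0:ℝ) < u := h2t.trans hu
      have hup : (0:ℝ) ≤ u ^ (-σ - 1) := (Real.rpow_pos_of_pos hu0 _).le
      have he : Real.exp (-(b/u)) ≤ 1 := by
        rw [Real.exp_le_one_iff]
        have : (0:ℝ) < b / u := div_pos hb hu0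
        linarith
      calc u ^ (-σ - 1) * Real.exp (-(b/u)) ≤ u ^ (-σ - 1) * 1 :=
            mul_le_mul_of_nonneg_left he hup
      _ = u ^ (-σ - 1) := mul_one _
    have step2 : ∫ u in Ioi (2*t), (u:ℝ) ^ (-σ - 1) = (2*t) ^ (-σ) / σ := by
      rw [integral_Ioi_rpow_of_lt (by linarith) h2t, show -σ - 1 + 1 = -σ by ring]
      field_simp
    have step3 : (2*t) ^ (-σ) ≤ t ^ (-σ) :=
      Real.rpow_le_rpow_of_nonpos ht ht2 (by linarith)
    calc ∫ u in Ioi (2*t), u ^ (-σ - 1) * Real.exp (-(b/u))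
        ≤ (2*t) ^ (-σ) / σ := step1.trans_eq step2
    _ ≤ t ^ (-σ) / σ := (div_le_div_iff_of_pos_right hσ).mpr step3
  have hTb : ∫ u in Ioi (2*t), u ^ (-σ - 1) * Real.exp (-(b/u)) ≤ CT * b ^ (-σ) := by
    refine le_trans ?_ (hT b hb).2
    refine setIntegral_mono_set hTint ?_ ?_
    · rw [EventuallyLE, ae_restrict_iff' measurableSet_Ioi]
      refine ae_of_all _ fun u hu => ?_
      have hu0 : (0:ℝ) < u := hu
      have h1 := Real.rpow_pos_of_pos hu0 (-σ - 1)
      have h2 := Real.exp_pos (-(b/u))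
      simp only [Pi.zero_apply]
      positivity
    · exact HasSubset.Subset.eventuallyLE (Ioi_subset_Ioi (by linarith))
  -- bounds for the M1 term
  have htσ : (0:ℝ) < t ^ (-σ) := Real.rpow_pos_of_pos ht _
  have hbσ : (0:ℝ) < b ^ (-σ) := Real.rpow_pos_of_pos hb _
  have hM1a : t ^ γ / γ * M1 ≤ CK / γ * t ^ (-σ) := by
    have he : Real.exp (-(b/(2*t))) ≤ 1 := by
      rw [Real.exp_le_one_iff]
      have : (0:ℝ) < b / (2*t) := div_pos hb (by linarith)
      linarith
    have hkey : t ^ γ * t ^ (-(n:ℝ)/2 - m) = t ^ (-σ) := by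
      rw [← Real.rpow_add ht]
      congr 1
      rw [hσdef, hmγ]; ring
    have htγ : (0:ℝ) < t ^ γ := Real.rpow_pos_of_pos ht _
    have htEm : (0:ℝ) < t ^ (-(n:ℝ)/2 - m) := Real.rpow_pos_of_pos ht _
    rw [hM1]
    calc t ^ γ / γ * (CK * t ^ (-(n:ℝ)/2 - m) * Real.exp (-(b/(2*t))))
        ≤ t ^ γ / γ * (CK * t ^ (-(n:ℝ)/2 - m) * 1) := by
          refine mul_le_mul_of_nonneg_left ?_ (by positivity)
          exact mul_le_mul_of_nonneg_left he (by positivity)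
    _ = CK / γ * (t ^ γ * t ^ (-(n:ℝ)/2 - m)) := by ring
    _ = CK / γ * t ^ (-σ) := by rw [hkey]
  have hM1b : t ^ γ / γ * M1 ≤ CK * Cx / γ * b ^ (-σ) := by
    have hkey : t ^ γ * t ^ (-(n:ℝ)/2 - m) = t ^ (-σ) := by
      rw [← Real.rpow_add ht]
      congr 1
      rw [hσdef, hmγ]; ring
    have hx0 : (0:ℝ) ≤ b / t := (div_pos hb ht).le
    have hXb := hX (b/t) hx0
    have hexp_eq : Real.exp (-(2⁻¹ * (b/t))) = Real.exp (-(b/(2*t))) := by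
      congr 1
      rw [div_mul_eq_div_div_swap]
      ring
    have htfrm : t ^ (-σ) = b ^ (-σ) * (b/t) ^ σ := by
      rw [Real.div_rpow hb.le ht.le, Real.rpow_neg hb.le, Real.rpow_neg ht.le]
      have hbs : (0:ℝ) < b ^ σ := Real.rpow_pos_of_pos hb _
      have hts : (0:ℝ) < t ^ σ := Real.rpow_pos_of_pos ht _
      field_simp
    have main : t ^ (-σ) * Real.exp (-(b/(2*t))) ≤ Cx * b ^ (-σ) := by
      rw [htfrm, ← hexp_eq]
      calc b ^ (-σ) * (b/t) ^ σ * Real.exp (-(2⁻¹ * (b/t)))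
          = b ^ (-σ) * ((b/t) ^ σ * Real.exp (-(2⁻¹ * (b/t)))) := by ring
      _ ≤ b ^ (-σ) * Cx := mul_le_mul_of_nonneg_left hXb hbσ.le
      _ = Cx * b ^ (-σ) := by ring
    rw [hM1]
    calc t ^ γ / γ * (CK * t ^ (-(n:ℝ)/2 - m) * Real.exp (-(b/(2*t))))
        = CK / γ * (t ^ γ * t ^ (-(n:ℝ)/2 - m) * Real.exp (-(b/(2*t)))) := by ring
    _ = CK / γ * (t ^ (-σ) * Real.exp (-(b/(2*t)))) := by rw [hkey]
    _ ≤ CK / γ * (Cx * b ^ (-σ)) := by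
        refine mul_le_mul_of_nonneg_left main (by positivity)
    _ = CK * Cx / γ * b ^ (-σ) := by ring
  -- conversion of b^(-σ) to (‖z‖^2)^(-σ)
  have hbconv : b ^ (-σ) = (8:ℝ) ^ σ * (‖z‖^2 : ℝ) ^ (-σ) := by
    rw [hbdef, Real.div_rpow (by positivity) (by norm_num : (0:ℝ) ≤ 8)]
    rw [Real.rpow_neg (by norm_num : (0:ℝ) ≤ 8)]
    have h8' : (0:ℝ) < (8:ℝ) ^ σ := h8
    field_simp
  -- total bounds
  have total_a : |weylDeriv β φ t|
      ≤ (Real.Gamma γ)⁻¹ * CK * (1/γ + 2/σ) * t ^ (-σ) := by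
    refine hW.trans ?_
    rw [hsplit]
    have sum_le : (∫ u in Ioc t (2*t), g u) + ∫ u in Ioi (2*t), g u
        ≤ CK / γ * t ^ (-σ) + 2 * CK * (t ^ (-σ) / σ) := by
      have i2 : ∫ u in Ioi (2*t), g u ≤ 2 * CK * (t ^ (-σ) / σ) :=
        hI2.trans (mul_le_mul_of_nonneg_left hTa (by positivity))
      exact add_le_add (hI1.trans hM1a) i2
    calc (Real.Gamma γ)⁻¹ * ((∫ u in Ioc t (2*t), g u) + ∫ u in Ioi (2*t), g u)
        ≤ (Real.Gamma γ)⁻¹ * (CK / γ * t ^ (-σ) + 2 * CK * (t ^ (-σ) / σ)) :=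
          mul_le_mul_of_nonneg_left sum_le (inv_pos.mpr hΓ).le
    _ = (Real.Gamma γ)⁻¹ * CK * (1/γ + 2/σ) * t ^ (-σ) := by ring
  have total_b : |weylDeriv β φ t|
      ≤ (Real.Gamma γ)⁻¹ * (CK * Cx / γ + 2 * CK * CT) * ((8:ℝ) ^ σ * (‖z‖^2 : ℝ) ^ (-σ)) := by
    refine hW.trans ?_
    rw [hsplit]
    have sum_le : (∫ u in Ioc t (2*t), g u) + ∫ u in Ioi (2*t), g u
        ≤ CK * Cx / γ * b ^ (-σ) + 2 * CK * (CT * b ^ (-σ)) := by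
      have i2 : ∫ u in Ioi (2*t), g u ≤ 2 * CK * (CT * b ^ (-σ)) :=
        hI2.trans (mul_le_mul_of_nonneg_left hTb (by positivity))
      exact add_le_add (hI1.trans hM1b) i2
    calc (Real.Gamma γ)⁻¹ * ((∫ u in Ioc t (2*t), g u) + ∫ u in Ioi (2*t), g u)
        ≤ (Real.Gamma γ)⁻¹ * (CK * Cx / γ * b ^ (-σ) + 2 * CK * (CT * b ^ (-σ))) :=
          mul_le_mul_of_nonneg_left sum_le (inv_pos.mpr hΓ).le
    _ = (Real.Gamma γ)⁻¹ * (CK * Cx / γ + 2 * CK * CT) * b ^ (-σ) := by ring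
    _ = (Real.Gamma γ)⁻¹ * (CK * Cx / γ + 2 * CK * CT) * ((8:ℝ) ^ σ * (‖z‖^2 : ℝ) ^ (-σ)) := by
        rw [hbconv]
  constructor
  · refine total_a.trans (mul_le_mul_of_nonneg_right ?_ htσ.le)
    have hrest : (0:ℝ) ≤ (Real.Gamma γ)⁻¹ * (CK * Cx / γ + 2 * CK * CT) * (8:ℝ) ^ σ := by
      positivity
    linarith
  · have hzσ : (0:ℝ) < (‖z‖^2 : ℝ) ^ (-σ) := Real.rpow_pos_of_pos (by positivity) _
    refine total_b.trans ?_
    have hre : (Real.Gamma γ)⁻¹ * (CK * Cx / γ + 2 * CK * CT) * ((8:ℝ) ^ σ * (‖z‖^2 : ℝ) ^ (-σ))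
        = ((Real.Gamma γ)⁻¹ * (CK * Cx / γ + 2 * CK * CT) * (8:ℝ) ^ σ) * (‖z‖^2 : ℝ) ^ (-σ) := by
      ring
    rw [hre]
    refine mul_le_mul_of_nonneg_right ?_ hzσ.le
    have hrest : (0:ℝ) ≤ (Real.Gamma γ)⁻¹ * CK * (1/γ + 2/σ) := by positivity
    linarith

/-- size estimate of the fractional Weyl derivative of the classical
heat kernel, in the `L^q((0,∞), dt/t)` norm. -/
theorem stmt_10 (n : ℕ) (hn : 1 ≤ n) (β q : ℝ) (hβ : 0 < β) (hq : 1 < q) :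
    ∃ C : ℝ, 0 < C ∧ ∀ z : EuclideanSpace ℝ (Fin n), z ≠ 0 →
      (∫⁻ t in Ioi (0 : ℝ),
          ENNReal.ofReal ((t ^ β * |weylDeriv β (fun s => heatKernel n s z) t|) ^ q / t)) ^
          (1 / q) ≤
        ENNReal.ofReal (C / ‖z‖ ^ n) := by
  obtain ⟨C1, hC1, hP⟩ := st10_pointwise n β hβ
  have hq0 : (0:ℝ) < q := by linarith
  have hn0 : (0:ℝ) < n := by exact_mod_cast hn
  set σ : ℝ := β + (n:ℝ)/2 with hσdef
  have hσ : 0 < σ := by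
    have h1 : (0:ℝ) ≤ (n:ℝ)/2 := by positivity
    rw [hσdef]; linarith
  set S : ℝ := 1/(β*q) + 2/((n:ℝ)*q) with hS
  have hSpos : 0 < S := by rw [hS]; positivity
  refine ⟨C1 * S ^ (1/q), by positivity, fun z hz => ?_⟩
  have hnz : 0 < ‖z‖ := norm_pos_iff.mpr hz
  set r : ℝ := ‖z‖^2 with hrdef
  have hr : 0 < r := by rw [hrdef]; positivity
  set K1 : ℝ := (C1 * r ^ (-σ)) ^ q with hK1
  have hK1pos : 0 < K1 := by
    have := Real.rpow_pos_of_pos hr (-σ)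
    rw [hK1]; positivity
  set K2 : ℝ := C1 ^ q with hK2
  have hK2pos : 0 < K2 := by rw [hK2]; positivity
  set p2 : ℝ := -((n:ℝ)/2*q) - 1 with hp2def
  have hp2 : p2 < -1 := by
    have : (0:ℝ) < (n:ℝ)/2*q := by positivity
    rw [hp2def]; linarith
  -- pointwise bound on (0, r]
  have key1 : ∀ t ∈ Ioc (0:ℝ) r,
      ENNReal.ofReal ((t ^ β * |weylDeriv β (fun s => heatKernel n s z) t|) ^ q / t)
        ≤ ENNReal.ofReal (K1 * t ^ (β*q - 1)) := by
    intro t htm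
    have ht : 0 < t := htm.1
    apply ENNReal.ofReal_le_ofReal
    have hWb := (hP z hz t ht).2
    have htβ : (0:ℝ) ≤ t ^ β := (Real.rpow_pos_of_pos ht β).le
    have h1 : t ^ β * |weylDeriv β (fun s => heatKernel n s z) t|
        ≤ t ^ β * (C1 * r ^ (-σ)) := by
      refine mul_le_mul_of_nonneg_left ?_ htβ
      rw [hrdef]
      exact hWb
    have h2 : (t ^ β * |weylDeriv β (fun s => heatKernel n s z) t|) ^ q
        ≤ (t ^ β * (C1 * r ^ (-σ))) ^ q := by
      refine Real.rpow_le_rpow ?_ h1 hq0.le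
      exact mul_nonneg htβ (abs_nonneg _)
    have h3 : (t ^ β * (C1 * r ^ (-σ))) ^ q = K1 * t ^ (β*q - 1) * t := by
      rw [mul_comm (t ^ β), Real.mul_rpow (by positivity) htβ, ← Real.rpow_mul ht.le,
        show β * q = (β*q - 1) + 1 by ring, Real.rpow_add_one ht.ne']
      rw [hK1]; ring
    calc (t ^ β * |weylDeriv β (fun s => heatKernel n s z) t|) ^ q / t
        ≤ (t ^ β * (C1 * r ^ (-σ))) ^ q / t := (div_le_div_iff_of_pos_right ht).mpr h2
    _ = K1 * t ^ (β*q - 1) := by rw [h3]; field_simp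
  -- pointwise bound on (r, ∞)
  have key2 : ∀ t ∈ Ioi r,
      ENNReal.ofReal ((t ^ β * |weylDeriv β (fun s => heatKernel n s z) t|) ^ q / t)
        ≤ ENNReal.ofReal (K2 * t ^ p2) := by
    intro t htm
    have ht : 0 < t := hr.trans htm
    apply ENNReal.ofReal_le_ofReal
    have hWb := (hP z hz t ht).1
    have htβ : (0:ℝ) ≤ t ^ β := (Real.rpow_pos_of_pos ht β).le
    have h1 : t ^ β * |weylDeriv β (fun s => heatKernel n s z) t|
        ≤ C1 * t ^ (-(n:ℝ)/2) := by
      have := mul_le_mul_of_nonneg_left hWb htβ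
      refine this.trans_eq ?_
      rw [show t ^ β * (C1 * t ^ (-σ)) = C1 * (t ^ β * t ^ (-σ)) by ring,
        ← Real.rpow_add ht]
      congr 1
      rw [hσdef]; ring
    have h2 : (t ^ β * |weylDeriv β (fun s => heatKernel n s z) t|) ^ q
        ≤ (C1 * t ^ (-(n:ℝ)/2)) ^ q := by
      refine Real.rpow_le_rpow ?_ h1 hq0.le
      exact mul_nonneg htβ (abs_nonneg _)
    have h3 : (C1 * t ^ (-(n:ℝ)/2)) ^ q = K2 * t ^ p2 * t := by
      rw [Real.mul_rpow hC1.le (Real.rpow_pos_of_pos ht _).le,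
        ← Real.rpow_mul ht.le,
        show -(n:ℝ)/2 * q = p2 + 1 by rw [hp2def]; ring,
        Real.rpow_add_one ht.ne']
      rw [hK2]; ring
    calc (t ^ β * |weylDeriv β (fun s => heatKernel n s z) t|) ^ q / t
        ≤ (C1 * t ^ (-(n:ℝ)/2)) ^ q / t := (div_le_div_iff_of_pos_right ht).mpr h2
    _ = K2 * t ^ p2 := by rw [h3]; field_simp
  -- integrals of the bounds
  have int1 : IntegrableOn (fun t : ℝ => K1 * t ^ (β*q - 1)) (Ioc 0 r) := by
    have hb1 : (-1:ℝ) < β*q - 1 := by nlinarith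
    have := intervalIntegral.intervalIntegrable_rpow' (a := 0) (b := r) hb1
    rw [intervalIntegrable_iff_integrableOn_Ioc_of_le hr.le] at this
    exact this.const_mul _
  have eval1 : ∫ t in Ioc (0:ℝ) r, K1 * t ^ (β*q - 1) = K1 * (r ^ (β*q) / (β*q)) := by
    rw [integral_const_mul]
    congr 1
    rw [← intervalIntegral.integral_of_le hr.le,
      integral_rpow (Or.inl (by nlinarith : (-1:ℝ) < β*q - 1))]
    rw [show β*q - 1 + 1 = β*q by ring, Real.zero_rpow (by positivity : β*q ≠ 0)]
    ring
  have int2 : IntegrableOn (fun t : ℝ => K2 * t ^ p2) (Ioi r) :=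
    (integrableOn_Ioi_rpow_of_lt hp2 hr).const_mul _
  have eval2 : ∫ t in Ioi r, K2 * t ^ p2 = K2 * (r ^ (-((n:ℝ)/2*q)) / ((n:ℝ)/2*q)) := by
    rw [integral_const_mul]
    congr 1
    rw [integral_Ioi_rpow_of_lt hp2 hr,
      show p2 + 1 = -((n:ℝ)/2*q) by rw [hp2def]; ring]
    ring
  -- lintegral bounds
  have I1le : ∫⁻ t in Ioc (0:ℝ) r,
      ENNReal.ofReal ((t ^ β * |weylDeriv β (fun s => heatKernel n s z) t|) ^ q / t)
        ≤ ENNReal.ofReal (K1 * (r ^ (β*q) / (β*q))) := by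
    refine le_trans (setLIntegral_mono' measurableSet_Ioc key1) ?_
    rw [← ofReal_integral_eq_lintegral_ofReal int1 ?_]
    · exact le_of_eq (congrArg ENNReal.ofReal eval1)
    · rw [EventuallyLE, ae_restrict_iff' measurableSet_Ioc]
      refine ae_of_all _ fun t htm => ?_
      have ht : (0:ℝ) < t := htm.1
      have := Real.rpow_pos_of_pos ht (β*q - 1)
      simp only [Pi.zero_apply]
      positivity
  have I2le : ∫⁻ t in Ioi r,
      ENNReal.ofReal ((t ^ β * |weylDeriv β (fun s => heatKernel n s z) t|) ^ q / t)
        ≤ ENNReal.ofReal (K2 * (r ^ (-((n:ℝ)/2*q)) / ((n:ℝ)/2*q))) := by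
    refine le_trans (setLIntegral_mono' measurableSet_Ioi key2) ?_
    rw [← ofReal_integral_eq_lintegral_ofReal int2 ?_]
    · exact le_of_eq (congrArg ENNReal.ofReal eval2)
    · rw [EventuallyLE, ae_restrict_iff' measurableSet_Ioi]
      refine ae_of_all _ fun t htm => ?_
      have ht : (0:ℝ) < t := hr.trans htm
      have := Real.rpow_pos_of_pos ht p2
      simp only [Pi.zero_apply]
      positivity
  -- combine
  have hsplitL : ∫⁻ t in Ioi (0:ℝ),
      ENNReal.ofReal ((t ^ β * |weylDeriv β (fun s => heatKernel n s z) t|) ^ q / t)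
      = (∫⁻ t in Ioc (0:ℝ) r,
          ENNReal.ofReal ((t ^ β * |weylDeriv β (fun s => heatKernel n s z) t|) ^ q / t))
        + ∫⁻ t in Ioi r,
          ENNReal.ofReal ((t ^ β * |weylDeriv β (fun s => heatKernel n s z) t|) ^ q / t) := by
    rw [← Ioc_union_Ioi_eq_Ioi hr.le,
      lintegral_union measurableSet_Ioi (Ioc_disjoint_Ioi le_rfl)]
  set A1 : ℝ := K1 * (r ^ (β*q) / (β*q)) with hA1
  set A2 : ℝ := K2 * (r ^ (-((n:ℝ)/2*q)) / ((n:ℝ)/2*q)) with hA2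
  have hA1pos : 0 < A1 := by
    have := Real.rpow_pos_of_pos hr (β*q)
    rw [hA1]; positivity
  have hA2pos : 0 < A2 := by
    have := Real.rpow_pos_of_pos hr (-((n:ℝ)/2*q))
    rw [hA2]; positivity
  have htotal : ∫⁻ t in Ioi (0:ℝ),
      ENNReal.ofReal ((t ^ β * |weylDeriv β (fun s => heatKernel n s z) t|) ^ q / t)
      ≤ ENNReal.ofReal (A1 + A2) := by
    rw [hsplitL, ENNReal.ofReal_add hA1pos.le hA2pos.le]
    exact add_le_add I1le I2le
  -- identify the constant
  have hzn : (0:ℝ) < ‖z‖ ^ n := by positivity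
  have hfinal_eq : A1 + A2 = (C1 * S ^ (1/q) / ‖z‖ ^ n) ^ q := by
    have e0 : (K1 : ℝ) = C1 ^ q * r ^ (-σ * q) := by
      rw [hK1, Real.mul_rpow hC1.le (Real.rpow_pos_of_pos hr _).le,
        ← Real.rpow_mul hr.le]
    have e1 : r ^ (-σ * q) * r ^ (β*q) = r ^ (-((n:ℝ)/2*q)) := by
      rw [← Real.rpow_add hr]
      congr 1
      rw [hσdef]; ring
    have e2 : ((‖z‖:ℝ) ^ n) ^ q = r ^ ((n:ℝ)/2*q) := by
      rw [← Real.rpow_natCast ‖z‖ n, ← Real.rpow_mul hnz.le, hrdef,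
        ← Real.rpow_natCast ‖z‖ 2, ← Real.rpow_mul hnz.le]
      congr 1
      push_cast; ring
    have e3 : ((S:ℝ) ^ (1/q)) ^ q = S := by
      rw [← Real.rpow_mul hSpos.le, one_div_mul_cancel hq0.ne', Real.rpow_one]
    have e4 : (C1 * S ^ (1/q) / ‖z‖ ^ n) ^ q
        = C1 ^ q * S * (r ^ ((n:ℝ)/2*q))⁻¹ := by
      rw [Real.div_rpow (by positivity) hzn.le,
        Real.mul_rpow hC1.le (Real.rpow_pos_of_pos hSpos _).le, e3, e2,
        div_eq_mul_inv]
    have e5 : r ^ (-((n:ℝ)/2*q)) = (r ^ ((n:ℝ)/2*q))⁻¹ := by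
      rw [← Real.rpow_neg hr.le]
    have e6 : A1 = C1 ^ q * (r ^ (-σ*q) * r ^ (β*q)) / (β*q) := by
      rw [hA1, e0]; ring
    have e7 : A1 = C1 ^ q * r ^ (-((n:ℝ)/2*q)) / (β*q) := by rw [e6, e1]
    rw [e7, hA2, hK2, e4, e5, hS]
    have hXpos : (0:ℝ) < (r ^ ((n:ℝ)/2*q))⁻¹ :=
      inv_pos.mpr (Real.rpow_pos_of_pos hr _)
    field_simp
  -- conclusion
  have hCpos : (0:ℝ) < C1 * S ^ (1/q) / ‖z‖ ^ n := by positivity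
  calc (∫⁻ t in Ioi (0:ℝ),
      ENNReal.ofReal ((t ^ β * |weylDeriv β (fun s => heatKernel n s z) t|) ^ q / t)) ^ (1/q)
      ≤ (ENNReal.ofReal (A1 + A2)) ^ (1/q) :=
        ENNReal.rpow_le_rpow htotal (by positivity)
  _ = ENNReal.ofReal ((A1 + A2) ^ (1/q)) :=
        ENNReal.ofReal_rpow_of_nonneg (by positivity) (by positivity)
  _ = ENNReal.ofReal (C1 * S ^ (1/q) / ‖z‖ ^ n) := by
        rw [hfinal_eq, ← Real.rpow_mul hCpos.le, mul_one_div_cancel hq0.ne',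
          Real.rpow_one]
end
end

section
/- Let n ≥ 1 and α > 0. There exists C > 0 such that for every s > 0: (i) ∫_0^∞ (st)^α |∂_s^α ∂_t^α W_{s+t}(z)| dt/t ≤ C |z|^{-n} for every z ∈ ℝ^n with z ≠ 0; and (ii) ∫_{ℝ^n} ∫_0^∞ (st)^α |∂_s^α ∂_t^α W_{s+t}(z)| dt/t dz ≤ C. Here ∂_s^α ∂_t^α W_{s+t}(z) denotes the iterated Weyl fractional derivatives, in s and then in t, of the function (s,t) ↦ W_{s+t}(z), where W_u(z) = (4πu)^{-n/2} e^{-|z|²/(4u)} is the classical heat kernel on ℝ^n. -/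
open MeasureTheory Real Set Filter
open scoped ENNReal NNReal

noncomputable section

namespace S18

/-- Unconditional: `ofReal` of a Bochner integral is at most the `lintegral` of `ofReal`. -/
lemma ofReal_integral_le {X : Type*} [MeasurableSpace X] (μ : Measure X) (f : X → ℝ) :
    ENNReal.ofReal (∫ x, f x ∂μ) ≤ ∫⁻ x, ENNReal.ofReal (f x) ∂μ := by
  by_cases hf : Integrable f μ
  · have h1 : ∫ x, f x ∂μ ≤ ∫ x, max (f x) 0 ∂μ :=
      integral_mono hf hf.pos_part (fun x => le_max_left _ _)
    have h2 : ENNReal.ofReal (∫ x, max (f x) 0 ∂μ) = ∫⁻ x, ENNReal.ofReal (max (f x) 0) ∂μ :=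
      ofReal_integral_eq_lintegral_ofReal hf.pos_part
        (Eventually.of_forall fun x => le_max_right _ _)
    calc ENNReal.ofReal (∫ x, f x ∂μ) ≤ ENNReal.ofReal (∫ x, max (f x) 0 ∂μ) :=
          ENNReal.ofReal_le_ofReal h1
      _ = ∫⁻ x, ENNReal.ofReal (max (f x) 0) ∂μ := h2
      _ = ∫⁻ x, ENNReal.ofReal (f x) ∂μ := by
          refine lintegral_congr fun x => ?_
          rcases le_total 0 (f x) with h | h
          · rw [max_eq_left h]
          · rw [max_eq_right h, ENNReal.ofReal_of_nonpos h, ENNReal.ofReal_zero]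
  · rw [integral_undef hf]; simp

/-- Iterated derivatives along a chain of functions on an open set. -/
lemma iteratedDeriv_eqOn_chain {U : Set ℝ} (hU : IsOpen U) (ψ : ℕ → ℝ → ℝ) (h : ℝ → ℝ)
    (h0 : Set.EqOn h (ψ 0) U) (hd : ∀ k, ∀ u ∈ U, HasDerivAt (ψ k) (ψ (k + 1) u) u) :
    ∀ k, Set.EqOn (iteratedDeriv k h) (ψ k) U := by
  intro k
  induction k with
  | zero => simpa using h0
  | succ k ih =>
    intro u hu
    rw [iteratedDeriv_succ]
    have hev : iteratedDeriv k h =ᶠ[nhds u] ψ k :=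
      Filter.eventuallyEq_of_mem (hU.mem_nhds hu) ih
    rw [hev.deriv_eq]
    exact (hd k u hu).deriv

lemma iteratedDeriv_hasDerivAt_chain {U : Set ℝ} (hU : IsOpen U) (ψ : ℕ → ℝ → ℝ) (h : ℝ → ℝ)
    (h0 : Set.EqOn h (ψ 0) U) (hd : ∀ k, ∀ u ∈ U, HasDerivAt (ψ k) (ψ (k + 1) u) u)
    (k : ℕ) {u : ℝ} (hu : u ∈ U) :
    HasDerivAt (iteratedDeriv k h) (iteratedDeriv (k + 1) h u) u := by
  have heq := iteratedDeriv_eqOn_chain hU ψ h h0 hd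
  have hev : iteratedDeriv k h =ᶠ[nhds u] ψ k :=
    Filter.eventuallyEq_of_mem (hU.mem_nhds hu) (heq k)
  have h1 : HasDerivAt (iteratedDeriv k h) (ψ (k + 1) u) u :=
    (hd k u hu).congr_of_eventuallyEq hev
  rwa [← heq (k + 1) hu] at h1

lemma pow_mul_exp_neg_le (j : ℕ) {y : ℝ} (hy : 0 ≤ y) :
    y ^ j * Real.exp (-y) ≤ 2 ^ j * j.factorial * Real.exp (-(y / 2)) := by
  have hfac : (0 : ℝ) < j.factorial := by positivity
  have h1 : (y / 2) ^ j / j.factorial ≤ Real.exp (y / 2) := by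
    calc (y / 2) ^ j / j.factorial
        ≤ ∑ i ∈ Finset.range (j + 1), (y / 2) ^ i / i.factorial := by
          refine Finset.single_le_sum (f := fun i => (y / 2) ^ i / (i.factorial : ℝ)) ?_
            (Finset.self_mem_range_succ j)
          intro i _; positivity
      _ ≤ Real.exp (y / 2) := Real.sum_le_exp_of_nonneg (by linarith) _
  have h2 : (y / 2) ^ j ≤ j.factorial * Real.exp (y / 2) := by
    rw [div_le_iff₀ hfac] at h1; linarith
  have h3 : y ^ j = 2 ^ j * (y / 2) ^ j := by
    rw [div_pow]; field_simp
  rw [h3]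
  have h4 : 2 ^ j * (y / 2) ^ j * Real.exp (-y)
      ≤ 2 ^ j * (j.factorial * Real.exp (y / 2)) * Real.exp (-y) := by
    gcongr
  refine h4.trans_eq ?_
  have hexp : Real.exp (y / 2) * Real.exp (-y) = Real.exp (-(y / 2)) := by
    rw [← Real.exp_add]; congr 1; ring
  rw [show (2:ℝ) ^ j * (↑j.factorial * Real.exp (y / 2)) * Real.exp (-y)
      = 2 ^ j * ↑j.factorial * (Real.exp (y / 2) * Real.exp (-y)) from by ring, hexp]

/-- Coefficients of the `k`-th derivative of `u ↦ u^(-n/2) * exp (-b/u)`. -/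
def acoef (n : ℕ) : ℕ → ℕ → ℝ
  | 0, i => if i = 0 then 1 else 0
  | k + 1, 0 => acoef n k 0
  | k + 1, i + 1 => acoef n k (i + 1) + (-(n : ℝ) / 2 - 2 * k + i) * acoef n k i

lemma acoef_eq_zero (n : ℕ) : ∀ k i, k < i → acoef n k i = 0 := by
  intro k
  induction k with
  | zero =>
    intro i hi
    rw [acoef, if_neg (by omega : ¬ i = 0)]
  | succ k ih =>
    intro i hi
    match i, hi with
    | i + 1, hi =>
      have h1 : k < i + 1 := by omega
      have h2 : k < i := by omega
      simp [acoef, ih _ h1, ih _ h2]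

def pw (n k i : ℕ) : ℝ := -(n : ℝ) / 2 - 2 * k + i

def Phi (n : ℕ) (b : ℝ) (k : ℕ) (u : ℝ) : ℝ :=
  ∑ i ∈ Finset.range (k + 1),
    acoef n k i * b ^ (k - i) * (u ^ pw n k i * Real.exp (-(b / u)))

lemma pw_sub_one (n k i : ℕ) : pw n k i - 1 = pw n (k + 1) (i + 1) := by
  simp only [pw]; push_cast; ring

lemma pw_sub_two (n k i : ℕ) : pw n k i - 2 = pw n (k + 1) i := by
  simp only [pw]; push_cast; ring

lemma Phi_hasDerivAt (n : ℕ) (b : ℝ) (k : ℕ) {u : ℝ} (hu : 0 < u) :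
    HasDerivAt (Phi n b k) (Phi n b (k + 1) u) u := by
  set E := Real.exp (-(b / u)) with hE
  have hterm : ∀ p : ℝ, HasDerivAt (fun v : ℝ => v ^ p * Real.exp (-(b / v)))
      (p * u ^ (p - 1) * E + b * u ^ (p - 2) * E) u := by
    intro p
    have h1 : HasDerivAt (fun v : ℝ => v ^ p) (p * u ^ (p - 1)) u :=
      Real.hasDerivAt_rpow_const (Or.inl hu.ne')
    have h2 : HasDerivAt (fun v : ℝ => -(b / v)) (b / u ^ 2) u := by
      have h2' : HasDerivAt (fun v : ℝ => -b * v⁻¹) (-b * -((u ^ 2)⁻¹)) u :=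
        (hasDerivAt_inv hu.ne').const_mul (-b)
      have hfun : (fun v : ℝ => -(b / v)) = fun v : ℝ => -b * v⁻¹ := by
        funext v; ring
      rw [hfun]
      convert h2' using 1
      field_simp
    have h3 : HasDerivAt (fun v : ℝ => Real.exp (-(b / v))) (Real.exp (-(b / u)) * (b / u ^ 2)) u :=
      h2.exp
    have h4 := h1.fun_mul h3
    refine h4.congr_deriv ?_
    have hup : u ^ (p - 2) = u ^ p / u ^ 2 := by
      rw [Real.rpow_sub hu, Real.rpow_two]
    rw [hup, ← hE]
    field_simp
  have hsum : HasDerivAt (Phi n b k)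
      (∑ i ∈ Finset.range (k + 1), acoef n k i * b ^ (k - i) *
        (pw n k i * u ^ (pw n k i - 1) * E + b * u ^ (pw n k i - 2) * E)) u := by
    unfold Phi
    exact HasDerivAt.fun_sum fun i _ => (hterm (pw n k i)).const_mul (acoef n k i * b ^ (k - i))
  convert hsum using 1
  -- now the algebraic identity
  have hsplit : ∀ i ∈ Finset.range (k + 1),
      acoef n k i * b ^ (k - i) *
        (pw n k i * u ^ (pw n k i - 1) * E + b * u ^ (pw n k i - 2) * E)
      = acoef n k i * b ^ (k - i) * (pw n k i * (u ^ pw n (k + 1) (i + 1) * E))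
        + acoef n k i * b ^ (k + 1 - i) * (u ^ pw n (k + 1) i * E) := by
    intro i hi
    have hik : i ≤ k := by
      simpa [Nat.lt_succ_iff] using Finset.mem_range.mp hi
    rw [pw_sub_one, pw_sub_two, show k + 1 - i = (k - i) + 1 from by omega, pow_succ]
    ring
  rw [Finset.sum_congr rfl hsplit, Finset.sum_add_distrib]
  -- the second sum: extend to range (k+2) and shift
  set D2 : ℕ → ℝ := fun i => acoef n k i * b ^ (k + 1 - i) * (u ^ pw n (k + 1) i * E) with hD2
  have hext : ∑ i ∈ Finset.range (k + 1), D2 i = ∑ i ∈ Finset.range (k + 2), D2 i := by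
    rw [Finset.sum_range_succ (f := D2) (n := k + 1)]
    have : D2 (k + 1) = 0 := by
      simp [hD2, acoef_eq_zero n k (k + 1) (by omega)]
    rw [this, add_zero]
  rw [hext, Finset.sum_range_succ' D2 (k + 1)]
  -- LHS (goal's left side): Phi n b (k+1) u
  unfold Phi
  rw [Finset.sum_range_succ'
    (fun j => acoef n (k + 1) j * b ^ (k + 1 - j) * (u ^ pw n (k + 1) j * Real.exp (-(b / u))))
    (k + 1)]
  rw [← hE]
  have hR0 : acoef n (k + 1) 0 = acoef n k 0 := by simp [acoef]
  rw [hR0]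
  have hmain : ∑ i ∈ Finset.range (k + 1),
      acoef n (k + 1) (i + 1) * b ^ (k + 1 - (i + 1)) * (u ^ pw n (k + 1) (i + 1) * E)
      = ∑ i ∈ Finset.range (k + 1),
          (acoef n k i * b ^ (k - i) * (pw n k i * (u ^ pw n (k + 1) (i + 1) * E))
            + D2 (i + 1)) := by
    refine Finset.sum_congr rfl fun i hi => ?_
    have hacoef : acoef n (k + 1) (i + 1)
        = acoef n k (i + 1) + (-(n : ℝ) / 2 - 2 * k + i) * acoef n k i := by
      simp [acoef]
    have hpw : (-(n : ℝ) / 2 - 2 * k + i) = pw n k i := by simp [pw]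
    simp only [hD2]
    have hsub : k + 1 - (i + 1) = k - i := by omega
    rw [hacoef, hpw, hsub]
    ring
  rw [hmain, Finset.sum_add_distrib]
  ring


lemma Phi_abs_le (n : ℕ) (k : ℕ) : ∃ C : ℝ, 0 < C ∧ ∀ b : ℝ, 0 ≤ b → ∀ u : ℝ, 0 < u →
    |Phi n b k u| ≤ C * (u ^ (-(n : ℝ) / 2 - k) * Real.exp (-(b / (2 * u)))) := by
  refine ⟨(∑ i ∈ Finset.range (k + 1),
    |acoef n k i| * 2 ^ (k - i) * (k - i).factorial) + 1, by positivity, ?_⟩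
  intro b hb u hu
  have key : ∀ i ∈ Finset.range (k + 1),
      |acoef n k i * b ^ (k - i) * (u ^ pw n k i * Real.exp (-(b / u)))|
      ≤ (|acoef n k i| * 2 ^ (k - i) * (k - i).factorial) *
          (u ^ (-(n : ℝ) / 2 - k) * Real.exp (-(b / (2 * u)))) := by
    intro i hi
    have hik : i ≤ k := by simpa [Nat.lt_succ_iff] using Finset.mem_range.mp hi
    set j := k - i with hj
    set y := b / u with hy
    have hy0 : 0 ≤ y := div_nonneg hb hu.le
    have habs : |acoef n k i * b ^ j * (u ^ pw n k i * Real.exp (-(b / u)))|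
        = |acoef n k i| * (b ^ j * (u ^ pw n k i * Real.exp (-(b / u)))) := by
      rw [abs_mul, abs_mul, abs_of_nonneg (pow_nonneg hb j),
        abs_of_nonneg (by positivity : (0:ℝ) ≤ u ^ pw n k i * Real.exp (-(b / u)))]
      ring
    have hclaim : b ^ j * u ^ pw n k i = y ^ j * u ^ (-(n : ℝ) / 2 - k) := by
      have h1 : y ^ j = b ^ j / u ^ j := div_pow b u j
      have h2 : u ^ pw n k i = u ^ (-(n : ℝ) / 2 - k) / u ^ j := by
        rw [← Real.rpow_natCast u j, ← Real.rpow_sub hu]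
        congr 1
        have : ((j : ℝ)) = (k : ℝ) - i := by
          rw [hj]; push_cast [Nat.cast_sub hik]; ring
        rw [this, pw]; ring
      rw [h1, h2]
      field_simp
    have hbd : y ^ j * Real.exp (-y) ≤ 2 ^ j * j.factorial * Real.exp (-(y / 2)) :=
      pow_mul_exp_neg_le j hy0
    have hexp1 : Real.exp (-(b / u)) = Real.exp (-y) := by rw [hy]
    have hexp2 : Real.exp (-(y / 2)) = Real.exp (-(b / (2 * u))) := by
      rw [hy]; congr 1; ring
    rw [habs]
    have : b ^ j * (u ^ pw n k i * Real.exp (-(b / u)))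
        = (y ^ j * Real.exp (-y)) * u ^ (-(n : ℝ) / 2 - k) := by
      rw [hexp1.symm] at *
      calc b ^ j * (u ^ pw n k i * Real.exp (-(b/u)))
          = (b ^ j * u ^ pw n k i) * Real.exp (-(b/u)) := by ring
        _ = (y ^ j * u ^ (-(n : ℝ) / 2 - k)) * Real.exp (-(b/u)) := by rw [hclaim]
        _ = (y ^ j * Real.exp (-(b/u))) * u ^ (-(n : ℝ) / 2 - k) := by ring
        _ = (y ^ j * Real.exp (-y)) * u ^ (-(n : ℝ) / 2 - k) := by rw [hexp1]
    rw [this]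
    have h5 : (y ^ j * Real.exp (-y)) * u ^ (-(n : ℝ) / 2 - k)
        ≤ (2 ^ j * j.factorial * Real.exp (-(y / 2))) * u ^ (-(n : ℝ) / 2 - k) :=
      mul_le_mul_of_nonneg_right hbd (Real.rpow_nonneg hu.le _)
    refine (mul_le_mul_of_nonneg_left h5 (abs_nonneg _)).trans_eq ?_
    rw [hexp2]
    ring
  calc |Phi n b k u| ≤ ∑ i ∈ Finset.range (k + 1),
        |acoef n k i * b ^ (k - i) * (u ^ pw n k i * Real.exp (-(b / u)))| :=
        Finset.abs_sum_le_sum_abs _ _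
    _ ≤ ∑ i ∈ Finset.range (k + 1), (|acoef n k i| * 2 ^ (k - i) * (k - i).factorial) *
          (u ^ (-(n : ℝ) / 2 - k) * Real.exp (-(b / (2 * u)))) :=
        Finset.sum_le_sum key
    _ = (∑ i ∈ Finset.range (k + 1), |acoef n k i| * 2 ^ (k - i) * (k - i).factorial) *
          (u ^ (-(n : ℝ) / 2 - k) * Real.exp (-(b / (2 * u)))) := by
        rw [Finset.sum_mul]
    _ ≤ ((∑ i ∈ Finset.range (k + 1), |acoef n k i| * 2 ^ (k - i) * (k - i).factorial) + 1) *
          (u ^ (-(n : ℝ) / 2 - k) * Real.exp (-(b / (2 * u)))) := by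
        have : (0:ℝ) ≤ u ^ (-(n : ℝ) / 2 - k) * Real.exp (-(b / (2 * u))) := by positivity
        nlinarith

lemma heat_eqOn (n : ℕ) (z : EuclideanSpace ℝ (Fin n)) :
    Set.EqOn (fun u => heatKernel n u z)
      (fun u => (4 * Real.pi) ^ (-(n : ℝ) / 2) * Phi n (‖z‖ ^ 2 / 4) 0 u) (Ioi 0) := by
  intro u hu
  have hu' : (0:ℝ) < u := hu
  simp only [heatKernel, Phi, acoef, pw]
  rw [Finset.sum_range_one]
  have h1 : (4 * Real.pi * u) ^ (-(n : ℝ) / 2)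
      = (4 * Real.pi) ^ (-(n : ℝ) / 2) * u ^ (-(n : ℝ) / 2) :=
    Real.mul_rpow (by positivity) hu'.le
  have h2 : -‖z‖ ^ 2 / (4 * u) = -(‖z‖ ^ 2 / 4 / u) := by ring
  rw [h1, h2]
  have h3 : -(n : ℝ) / 2 - 2 * (0:ℕ) + (0:ℕ) = -(n : ℝ) / 2 := by push_cast; ring
  rw [h3]
  simp
  ring

lemma heat_chain (n : ℕ) (z : EuclideanSpace ℝ (Fin n)) (k : ℕ) {u : ℝ} (hu : u ∈ Ioi (0:ℝ)) :
    HasDerivAt (fun u => (4 * Real.pi) ^ (-(n : ℝ) / 2) * Phi n (‖z‖ ^ 2 / 4) k u)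
      ((4 * Real.pi) ^ (-(n : ℝ) / 2) * Phi n (‖z‖ ^ 2 / 4) (k + 1) u) u :=
  (Phi_hasDerivAt n (‖z‖ ^ 2 / 4) k hu).const_mul _

lemma heat_iteratedDeriv (n : ℕ) (z : EuclideanSpace ℝ (Fin n)) (k : ℕ) :
    Set.EqOn (iteratedDeriv k (fun u => heatKernel n u z))
      (fun u => (4 * Real.pi) ^ (-(n : ℝ) / 2) * Phi n (‖z‖ ^ 2 / 4) k u) (Ioi 0) :=
  iteratedDeriv_eqOn_chain isOpen_Ioi _ _ (heat_eqOn n z)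
    (fun k u hu => heat_chain n z k hu) k

lemma heat_hasDerivAt (n : ℕ) (z : EuclideanSpace ℝ (Fin n)) (k : ℕ) {u : ℝ}
    (hu : u ∈ Ioi (0:ℝ)) :
    HasDerivAt (iteratedDeriv k (fun u => heatKernel n u z))
      (iteratedDeriv (k + 1) (fun u => heatKernel n u z) u) u :=
  iteratedDeriv_hasDerivAt_chain isOpen_Ioi _ _ (heat_eqOn n z)
    (fun k u hu => heat_chain n z k hu) k hu

lemma heat_deriv_bound (n : ℕ) (K : ℕ) : ∃ C : ℝ, 0 < C ∧
    ∀ (z : EuclideanSpace ℝ (Fin n)) (u : ℝ), 0 < u →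
      |iteratedDeriv K (fun u => heatKernel n u z) u|
        ≤ C * (u ^ (-(n : ℝ) / 2 - K) * Real.exp (-(‖z‖ ^ 2 / (8 * u)))) := by
  obtain ⟨C, hC, hbd⟩ := Phi_abs_le n K
  refine ⟨(4 * Real.pi) ^ (-(n : ℝ) / 2) * C, by positivity, ?_⟩
  intro z u hu
  rw [heat_iteratedDeriv n z K hu]
  have h1 : |(4 * Real.pi) ^ (-(n : ℝ) / 2) * Phi n (‖z‖ ^ 2 / 4) K u|
      = (4 * Real.pi) ^ (-(n : ℝ) / 2) * |Phi n (‖z‖ ^ 2 / 4) K u| := by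
    rw [abs_mul, abs_of_nonneg (by positivity : (0:ℝ) ≤ (4 * Real.pi) ^ (-(n : ℝ) / 2))]
  rw [h1, mul_assoc]
  refine mul_le_mul_of_nonneg_left ?_ (by positivity)
  have := hbd (‖z‖ ^ 2 / 4) (by positivity) u hu
  refine this.trans_eq ?_
  congr 2
  ring

lemma rpow_neg_anti {a c : ℝ} (ha : 0 < a) (hac : a ≤ c) {p : ℝ} (hp : 0 ≤ p) :
    c ^ (-p) ≤ a ^ (-p) := by
  rw [Real.rpow_neg (by linarith), Real.rpow_neg ha.le]
  exact inv_anti₀ (Real.rpow_pos_of_pos ha p) (Real.rpow_le_rpow ha.le hac hp)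

lemma contOn_aux {d p x : ℝ} (hx : 0 < x) :
    ContinuousOn (fun v : ℝ => v ^ d * (x + v) ^ (-p)) (Ioi 0) := by
  apply ContinuousOn.mul
  · exact fun v hv =>
      (Real.continuousAt_rpow_const v d (Or.inl (ne_of_gt hv))).continuousWithinAt
  · intro v hv
    have h1 : ContinuousAt (fun w : ℝ => w ^ (-p)) (x + v) :=
      Real.continuousAt_rpow_const (x + v) (-p)
        (Or.inl (by have : (0:ℝ) < v := hv; positivity))
    exact (h1.comp ((continuous_const.add continuous_id).continuousAt)).continuousWithinAt

open intervalIntegral in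
/-- Key comparison: `∫_0^∞ v^d (x+v)^{-p} dv ≲ x^{d+1-p}`. -/
lemma C1 {d p : ℝ} (hd : -1 < d) (hdp : d + 1 < p) {x : ℝ} (hx : 0 < x) :
    IntegrableOn (fun v => v ^ d * (x + v) ^ (-p)) (Ioi (0:ℝ)) ∧
    ∫ v in Ioi (0:ℝ), v ^ d * (x + v) ^ (-p)
      ≤ (1 / (d + 1) + 1 / (p - d - 1)) * x ^ (d + 1 - p) := by
  have hp0 : 0 < p := by linarith
  set f : ℝ → ℝ := fun v => v ^ d * (x + v) ^ (-p) with hf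
  -- piece 1 : Ioc 0 x
  have hmeas1 : AEStronglyMeasurable f (volume.restrict (Ioc 0 x)) :=
    ((contOn_aux hx).mono Ioc_subset_Ioi_self).aestronglyMeasurable measurableSet_Ioc
  have hg1 : IntegrableOn (fun v : ℝ => v ^ d * x ^ (-p)) (Ioc 0 x) :=
    ((_root_.intervalIntegral.intervalIntegrable_rpow' hd (a := 0) (b := x)).1).mul_const _
  have hbd1 : ∀ v ∈ Ioc (0:ℝ) x, f v ≤ v ^ d * x ^ (-p) := by
    intro v hv
    exact mul_le_mul_of_nonneg_left (rpow_neg_anti hx (by linarith [hv.1]) hp0.le)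
      (Real.rpow_nonneg hv.1.le d)
  have hnn1 : ∀ v ∈ Ioc (0:ℝ) x, 0 ≤ f v := by
    intro v hv
    have h1 : (0:ℝ) < v := hv.1
    positivity
  have hf1 : IntegrableOn f (Ioc 0 x) := by
    refine MeasureTheory.Integrable.mono hg1 hmeas1 ?_
    filter_upwards [ae_restrict_mem measurableSet_Ioc] with v hv
    rw [Real.norm_eq_abs, Real.norm_eq_abs, abs_of_nonneg (hnn1 v hv)]
    refine (hbd1 v hv).trans (le_abs_self _)
  have hval1 : ∫ v in Ioc (0:ℝ) x, f v ≤ x ^ (d + 1 - p) / (d + 1) := by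
    have h1 : ∫ v in Ioc (0:ℝ) x, f v ≤ ∫ v in Ioc (0:ℝ) x, v ^ d * x ^ (-p) :=
      setIntegral_mono_on hf1 hg1 measurableSet_Ioc hbd1
    have h2 : ∫ v in Ioc (0:ℝ) x, v ^ d * x ^ (-p)
        = (∫ v in Ioc (0:ℝ) x, v ^ d) * x ^ (-p) := integral_mul_const _ _
    have h3 : ∫ v in Ioc (0:ℝ) x, (v:ℝ) ^ d = x ^ (d + 1) / (d + 1) := by
      rw [← _root_.intervalIntegral.integral_of_le hx.le]
      rw [integral_rpow (Or.inl hd), Real.zero_rpow (by linarith : d + 1 ≠ 0)]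
      ring
    have h4 : x ^ (d + 1) / (d + 1) * x ^ (-p) = x ^ (d + 1 - p) / (d + 1) := by
      rw [div_mul_eq_mul_div, ← Real.rpow_add hx,
        show d + 1 + -p = d + 1 - p from by ring]
    rw [h2, h3] at h1
    rw [← h4]
    exact h1
  -- piece 2 : Ioi x
  have hg2 : IntegrableOn (fun v : ℝ => v ^ (d - p)) (Ioi x) :=
    integrableOn_Ioi_rpow_of_lt (by linarith) hx
  have hbd2 : ∀ v ∈ Ioi x, f v ≤ v ^ (d - p) := by
    intro v hv
    have hv0 : (0:ℝ) < v := hx.trans hv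
    have h1 : (x + v) ^ (-p) ≤ v ^ (-p) := rpow_neg_anti hv0 (by linarith) hp0.le
    have h2 : v ^ d * v ^ (-p) = v ^ (d - p) := by
      rw [← Real.rpow_add hv0, sub_eq_add_neg]
    calc f v ≤ v ^ d * v ^ (-p) :=
          mul_le_mul_of_nonneg_left h1 (Real.rpow_nonneg hv0.le d)
      _ = v ^ (d - p) := h2
  have hnn2 : ∀ v ∈ Ioi x, 0 ≤ f v := by
    intro v hv
    have h1 : (0:ℝ) < v := hx.trans hv
    positivity
  have hmeas2 : AEStronglyMeasurable f (volume.restrict (Ioi x)) :=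
    ((contOn_aux hx).mono (Ioi_subset_Ioi hx.le)).aestronglyMeasurable measurableSet_Ioi
  have hf2 : IntegrableOn f (Ioi x) := by
    refine MeasureTheory.Integrable.mono hg2 hmeas2 ?_
    filter_upwards [ae_restrict_mem measurableSet_Ioi] with v hv
    rw [Real.norm_eq_abs, Real.norm_eq_abs, abs_of_nonneg (hnn2 v hv)]
    refine (hbd2 v hv).trans (le_abs_self _)
  have hval2 : ∫ v in Ioi x, f v ≤ x ^ (d + 1 - p) / (p - d - 1) := by
    have h1 : ∫ v in Ioi x, f v ≤ ∫ v in Ioi x, v ^ (d - p) :=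
      setIntegral_mono_on hf2 hg2 measurableSet_Ioi hbd2
    have h2 : ∫ v in Ioi x, (v:ℝ) ^ (d - p) = x ^ (d + 1 - p) / (p - d - 1) := by
      rw [integral_Ioi_rpow_of_lt (by linarith) hx]
      rw [show d - p + 1 = d + 1 - p by ring]
      rw [div_eq_div_iff (by linarith) (by linarith)]
      ring
    rw [h2] at h1
    exact h1
  -- combine
  have hunion : Ioc 0 x ∪ Ioi x = Ioi (0:ℝ) := Ioc_union_Ioi_eq_Ioi hx.le
  have hint : IntegrableOn f (Ioi (0:ℝ)) := by
    rw [← hunion]; exact hf1.union hf2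
  refine ⟨hint, ?_⟩
  have hsplit : ∫ v in Ioi (0:ℝ), f v = (∫ v in Ioc (0:ℝ) x, f v) + ∫ v in Ioi x, f v := by
    rw [← hunion]
    exact setIntegral_union (Ioc_disjoint_Ioi le_rfl) measurableSet_Ioi hf1 hf2
  rw [hsplit]
  have : (1 / (d + 1) + 1 / (p - d - 1)) * x ^ (d + 1 - p)
      = x ^ (d + 1 - p) / (d + 1) + x ^ (d + 1 - p) / (p - d - 1) := by ring
  rw [this]
  exact add_le_add hval1 hval2

lemma C1L {d p : ℝ} (hd : -1 < d) (hdp : d + 1 < p) {x : ℝ} (hx : 0 < x) :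
    ∫⁻ v in Ioi (0:ℝ), ENNReal.ofReal (v ^ d * (x + v) ^ (-p))
      ≤ ENNReal.ofReal ((1 / (d + 1) + 1 / (p - d - 1)) * x ^ (d + 1 - p)) := by
  obtain ⟨hint, hval⟩ := C1 hd hdp hx
  rw [← ofReal_integral_eq_lintegral_ofReal hint ?_]
  · exact ENNReal.ofReal_le_ofReal hval
  · filter_upwards [ae_restrict_mem measurableSet_Ioi] with v hv
    have h1 : (0:ℝ) < v := hv
    positivity

lemma integral_Ioi_shift {E : Type*} [NormedAddCommGroup E] [NormedSpace ℝ E]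
    (g : ℝ → E) (t : ℝ) :
    ∫ w in Ioi t, g w = ∫ v in Ioi (0:ℝ), g (t + v) := by
  have h1 : ∫ v in Ioi (0:ℝ), g (t + v)
      = ∫ v, (Ioi (0:ℝ)).indicator (fun v => g (t + v)) v :=
    (integral_indicator measurableSet_Ioi).symm
  have h2 : (fun v => (Ioi (0:ℝ)).indicator (fun v => g (t + v)) v)
      = fun v => (Ioi t).indicator g (v + t) := by
    funext v
    by_cases hv : v ∈ Ioi (0:ℝ)
    · have hv' : v + t ∈ Ioi t := by
        have : (0:ℝ) < v := hv
        simp only [mem_Ioi]; linarith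
      rw [indicator_of_mem hv, indicator_of_mem hv', add_comm]
    · have hv' : v + t ∉ Ioi t := by
        simp only [mem_Ioi] at hv ⊢
        intro h; exact hv (by linarith)
      rw [indicator_of_notMem hv, indicator_of_notMem hv']
  rw [h1, h2, integral_add_right_eq_self ((Ioi t).indicator g) t,
    integral_indicator measurableSet_Ioi]

lemma weylDeriv_comp_add (α : ℝ) (ψ : ℝ → ℝ) (c t : ℝ) :
    weylDeriv α (fun x => ψ (x + c)) t = weylDeriv α ψ (t + c) := by
  unfold weylDeriv
  simp only [iteratedDeriv_comp_add_const]
  congr 1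
  rw [integral_Ioi_shift
    (fun u => ((u - t) ^ (((⌊α⌋₊ : ℝ) + 1) - α - 1)) • iteratedDeriv (⌊α⌋₊ + 1) ψ (u + c)) t]
  rw [integral_Ioi_shift
    (fun u => ((u - (t + c)) ^ (((⌊α⌋₊ : ℝ) + 1) - α - 1)) • iteratedDeriv (⌊α⌋₊ + 1) ψ u)
    (t + c)]
  congr 1
  funext v
  rw [show t + v - t = v by ring, show t + c + v - (t + c) = v by ring,
    show t + v + c = t + c + v by ring]

lemma double_weyl_eq (n : ℕ) (α : ℝ) (z : EuclideanSpace ℝ (Fin n)) (s t : ℝ) :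
    weylDeriv α (fun τ => weylDeriv α (fun σ => heatKernel n (σ + τ) z) s) t
    = weylDeriv α (weylDeriv α (fun u => heatKernel n u z)) (s + t) := by
  have hinner : (fun τ => weylDeriv α (fun σ => heatKernel n (σ + τ) z) s)
      = fun τ => (weylDeriv α (fun u => heatKernel n u z)) (τ + s) := by
    funext τ
    rw [weylDeriv_comp_add α (fun u => heatKernel n u z) τ s, add_comm]
  rw [hinner, weylDeriv_comp_add α (weylDeriv α (fun u => heatKernel n u z)) s t,
    add_comm t s]

def dal (α : ℝ) : ℝ := ((⌊α⌋₊ : ℝ) + 1) - α - 1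

lemma drop_exp {C A e : ℝ} (hC : 0 ≤ C) (hA : 0 ≤ A) (he : e ≤ 1) :
    C * (A * e) ≤ C * A := by
  have h1 : A * e ≤ A * 1 := mul_le_mul_of_nonneg_left he hA
  rw [mul_one] at h1
  exact mul_le_mul_of_nonneg_left h1 hC

lemma dal_neg1 {α : ℝ} (hα : 0 ≤ α) : -1 < dal α := by
  unfold dal
  have := Nat.lt_floor_add_one α
  linarith

lemma dal_le0 {α : ℝ} (hα : 0 ≤ α) : dal α ≤ 0 := by
  unfold dal
  have := Nat.floor_le hα
  linarith

def Gk (n : ℕ) (α : ℝ) (z : EuclideanSpace ℝ (Fin n)) (k : ℕ) (t : ℝ) : ℝ :=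
  ∫ v in Ioi (0:ℝ), v ^ dal α *
    iteratedDeriv (⌊α⌋₊ + 1 + k) (fun u => heatKernel n u z) (t + v)

lemma weylDeriv_heat_eq (n : ℕ) (α : ℝ) (z : EuclideanSpace ℝ (Fin n)) :
    weylDeriv α (fun u => heatKernel n u z)
      = fun t => (Real.Gamma (((⌊α⌋₊ : ℝ) + 1) - α))⁻¹ * Gk n α z 0 t := by
  funext t
  unfold weylDeriv Gk
  rw [smul_eq_mul]
  congr 1
  rw [integral_Ioi_shift (fun u => ((u - t) ^ (((⌊α⌋₊ : ℝ) + 1) - α - 1)) •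
    iteratedDeriv (⌊α⌋₊ + 1) (fun u => heatKernel n u z) u) t]
  congr 1
  funext v
  rw [smul_eq_mul, Nat.add_zero, show t + v - t = v from by ring]
  rfl

lemma Gk_aesm (n : ℕ) (z : EuclideanSpace ℝ (Fin n)) (K : ℕ) {t : ℝ} (ht : 0 < t) (d : ℝ) :
    AEStronglyMeasurable
      (fun v => v ^ d * iteratedDeriv K (fun u => heatKernel n u z) (t + v))
      (volume.restrict (Ioi 0)) := by
  refine ContinuousOn.aestronglyMeasurable ?_ measurableSet_Ioi
  apply ContinuousOn.mul
  · exact fun v hv => (Real.continuousAt_rpow_const v d (Or.inl (ne_of_gt hv))).continuousWithinAt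
  · intro v hv
    have hv0 : (0:ℝ) < v := hv
    have h1 : ContinuousAt (iteratedDeriv K (fun u => heatKernel n u z)) (t + v) :=
      (heat_hasDerivAt n z K (show t + v ∈ Ioi (0:ℝ) from by
        simp only [mem_Ioi]; linarith)).continuousAt
    exact (h1.comp ((continuous_const.add continuous_id).continuousAt)).continuousWithinAt

lemma Gk_integrableOn (n : ℕ) (hn : 1 ≤ n) {α : ℝ} (hα : 0 < α)
    (z : EuclideanSpace ℝ (Fin n)) (K : ℕ) (hK : 1 ≤ K) {t : ℝ} (ht : 0 < t) :
    IntegrableOn (fun v => v ^ dal α * iteratedDeriv K (fun u => heatKernel n u z) (t + v))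
      (Ioi 0) := by
  obtain ⟨C, hC, hbd⟩ := heat_deriv_bound n K
  have hfl := Nat.floor_le hα.le
  have hn' : (1:ℝ) ≤ n := by exact_mod_cast hn
  have hK' : (1:ℝ) ≤ K := by exact_mod_cast hK
  have hdp : dal α + 1 < (n:ℝ)/2 + K := by unfold dal; linarith
  have hint := ((C1 (dal_neg1 hα.le) hdp ht).1).const_mul C
  refine MeasureTheory.Integrable.mono hint (Gk_aesm n z K ht (dal α)) ?_
  filter_upwards [ae_restrict_mem measurableSet_Ioi] with v hv
  have hv0 : (0:ℝ) < v := hv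
  rw [Real.norm_eq_abs, Real.norm_eq_abs, abs_mul,
    abs_of_nonneg (Real.rpow_nonneg hv0.le _)]
  have hb := hbd z (t + v) (by linarith)
  have hexp : Real.exp (-(‖z‖ ^ 2 / (8 * (t + v)))) ≤ 1 := by
    rw [Real.exp_le_one_iff]
    have : (0:ℝ) ≤ ‖z‖ ^ 2 / (8 * (t + v)) := by positivity
    linarith
  have h2 : v ^ dal α * |iteratedDeriv K (fun u => heatKernel n u z) (t + v)|
      ≤ C * (v ^ dal α * (t + v) ^ (-((n:ℝ)/2 + K))) := by
    have h3 : (t + v) ^ (-(n:ℝ)/2 - K) = (t + v) ^ (-((n:ℝ)/2 + K)) := by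
      congr 1; ring
    have h4 := hb.trans
      (drop_exp hC.le (Real.rpow_nonneg (by linarith : (0:ℝ) ≤ t + v) (-(n:ℝ)/2 - K)) hexp)
    calc v ^ dal α * |iteratedDeriv K (fun u => heatKernel n u z) (t + v)|
        ≤ v ^ dal α * (C * (t + v) ^ (-(n:ℝ)/2 - K)) :=
          mul_le_mul_of_nonneg_left h4 (Real.rpow_nonneg hv0.le _)
      _ = C * (v ^ dal α * (t + v) ^ (-((n:ℝ)/2 + K))) := by rw [← h3]; ring
  exact h2.trans (le_abs_self _)

lemma Gk_hasDerivAt (n : ℕ) (hn : 1 ≤ n) {α : ℝ} (hα : 0 < α)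
    (z : EuclideanSpace ℝ (Fin n)) (k : ℕ) {t₀ : ℝ} (ht₀ : 0 < t₀) :
    HasDerivAt (Gk n α z k) (Gk n α z (k + 1) t₀) t₀ := by
  set M1 := ⌊α⌋₊ + 1 + k with hM1
  obtain ⟨C, hC, hbd⟩ := heat_deriv_bound n (M1 + 1)
  set p : ℝ := (n:ℝ)/2 + (M1 + 1 : ℕ) with hp
  have hfl := Nat.floor_le hα.le
  have hn' : (1:ℝ) ≤ n := by exact_mod_cast hn
  have hM1' : (1:ℝ) ≤ (M1 + 1 : ℕ) := by exact_mod_cast Nat.le_add_left 1 M1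
  have hdp : dal α + 1 < p := by rw [hp]; unfold dal; linarith
  have hp0 : 0 ≤ p := by rw [hp]; positivity
  have ht2 : (0:ℝ) < t₀/2 := by linarith
  have key := hasDerivAt_integral_of_dominated_loc_of_deriv_le
    (μ := volume.restrict (Ioi (0:ℝ)))
    (F := fun t v => v ^ dal α * iteratedDeriv M1 (fun u => heatKernel n u z) (t + v))
    (F' := fun t v => v ^ dal α * iteratedDeriv (M1 + 1) (fun u => heatKernel n u z) (t + v))
    (x₀ := t₀) (bound := fun v => C * (v ^ dal α * (t₀/2 + v) ^ (-p)))
    (s := Metric.ball t₀ (t₀/2)) (Metric.ball_mem_nhds _ (by positivity))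
    (by
      filter_upwards [eventually_gt_nhds ht₀] with x hx
      exact Gk_aesm n z M1 hx (dal α))
    (Gk_integrableOn n hn hα z M1 (by omega) ht₀)
    (Gk_aesm n z (M1 + 1) ht₀ (dal α))
    (by
      filter_upwards [ae_restrict_mem measurableSet_Ioi] with v hv
      intro x hx
      have hv0 : (0:ℝ) < v := hv
      have hx2 : t₀/2 < x := by
        have h1 := abs_lt.mp (by rw [Metric.mem_ball, Real.dist_eq] at hx; exact hx)
        linarith [h1.1]
      have hxv : (0:ℝ) < x + v := by linarith
      rw [Real.norm_eq_abs, abs_mul, abs_of_nonneg (Real.rpow_nonneg hv0.le _)]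
      have hb := hbd z (x + v) hxv
      have hexp : Real.exp (-(‖z‖ ^ 2 / (8 * (x + v)))) ≤ 1 := by
        rw [Real.exp_le_one_iff]
        have : (0:ℝ) ≤ ‖z‖ ^ 2 / (8 * (x + v)) := by positivity
        linarith
      have h3 : (x + v) ^ (-(n:ℝ)/2 - (M1 + 1 : ℕ)) = (x + v) ^ (-p) := by
        rw [hp]; congr 1; push_cast; ring
      have h4 : |iteratedDeriv (M1 + 1) (fun u => heatKernel n u z) (x + v)|
          ≤ C * (x + v) ^ (-p) := by
        rw [← h3]
        exact hb.trans (drop_exp hC.le (Real.rpow_nonneg hxv.le _) hexp)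
      have h5 : (x + v) ^ (-p) ≤ (t₀/2 + v) ^ (-p) :=
        rpow_neg_anti (by linarith) (by linarith) hp0
      calc v ^ dal α * |iteratedDeriv (M1 + 1) (fun u => heatKernel n u z) (x + v)|
          ≤ v ^ dal α * (C * (t₀/2 + v) ^ (-p)) := by
            refine mul_le_mul_of_nonneg_left ?_ (Real.rpow_nonneg hv0.le _)
            refine h4.trans ?_
            exact mul_le_mul_of_nonneg_left h5 hC.le
        _ = C * (v ^ dal α * (t₀/2 + v) ^ (-p)) := by ring)
    (((C1 (dal_neg1 hα.le) hdp ht2).1).const_mul C)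
    (by
      filter_upwards [ae_restrict_mem measurableSet_Ioi] with v hv
      intro x hx
      have hv0 : (0:ℝ) < v := hv
      have hx2 : t₀/2 < x := by
        have h1 := abs_lt.mp (by rw [Metric.mem_ball, Real.dist_eq] at hx; exact hx)
        linarith [h1.1]
      have hxv : x + v ∈ Ioi (0:ℝ) := by simp only [mem_Ioi]; linarith
      have h2 := heat_hasDerivAt n z M1 hxv
      have h3 := h2.comp x ((hasDerivAt_id x).add_const v)
      simp only [mul_one] at h3
      exact h3.const_mul _)
  exact key.2

lemma weylHeat_iteratedDeriv (n : ℕ) (hn : 1 ≤ n) {α : ℝ} (hα : 0 < α)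
    (z : EuclideanSpace ℝ (Fin n)) :
    Set.EqOn (iteratedDeriv (⌊α⌋₊ + 1) (weylDeriv α (fun u => heatKernel n u z)))
      (fun t => (Real.Gamma (((⌊α⌋₊ : ℝ) + 1) - α))⁻¹ * Gk n α z (⌊α⌋₊ + 1) t) (Ioi 0) := by
  refine iteratedDeriv_eqOn_chain isOpen_Ioi
    (fun k t => (Real.Gamma (((⌊α⌋₊ : ℝ) + 1) - α))⁻¹ * Gk n α z k t) _ ?_ ?_ (⌊α⌋₊ + 1)
  · intro t _
    rw [weylDeriv_heat_eq n α z]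
  · intro k u hu
    exact (Gk_hasDerivAt n hn hα z k hu).const_mul _

lemma Gamma_inv_pos {α : ℝ} : 0 < (Real.Gamma (((⌊α⌋₊ : ℝ) + 1) - α))⁻¹ := by
  have h1 : 0 < ((⌊α⌋₊ : ℝ) + 1) - α := by
    have := Nat.lt_floor_add_one α; linarith
  exact inv_pos.mpr (Real.Gamma_pos_of_pos h1)

lemma weyl_abs_le (α : ℝ) (φ : ℝ → ℝ) (t : ℝ) :
    |weylDeriv α φ t| ≤ (Real.Gamma (((⌊α⌋₊ : ℝ) + 1) - α))⁻¹ *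
      ∫ w in Ioi (0:ℝ), |w ^ dal α * iteratedDeriv (⌊α⌋₊ + 1) φ (t + w)| := by
  have hΓ := Gamma_inv_pos (α := α)
  unfold weylDeriv
  rw [smul_eq_mul, abs_mul, abs_of_nonneg hΓ.le]
  refine mul_le_mul_of_nonneg_left ?_ hΓ.le
  rw [← Real.norm_eq_abs]
  calc ‖∫ u in Ioi t, ((u - t) ^ (((⌊α⌋₊ : ℝ) + 1) - α - 1)) •
        iteratedDeriv (⌊α⌋₊ + 1) φ u‖
      ≤ ∫ u in Ioi t, ‖((u - t) ^ (((⌊α⌋₊ : ℝ) + 1) - α - 1)) •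
          iteratedDeriv (⌊α⌋₊ + 1) φ u‖ := norm_integral_le_integral_norm _
    _ = ∫ w in Ioi (0:ℝ), |w ^ dal α * iteratedDeriv (⌊α⌋₊ + 1) φ (t + w)| := by
        rw [integral_Ioi_shift (fun u => ‖((u - t) ^ (((⌊α⌋₊ : ℝ) + 1) - α - 1)) •
          iteratedDeriv (⌊α⌋₊ + 1) φ u‖) t]
        congr 1
        funext w
        rw [smul_eq_mul, Real.norm_eq_abs, show t + w - t = w from by ring]
        rfl

lemma rpow_half_exp_le (n : ℕ) : ∃ D : ℝ, 0 < D ∧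
    ∀ x : ℝ, 0 ≤ x → x ^ ((n:ℝ)/2) * Real.exp (-x) ≤ D := by
  refine ⟨1 + 2 ^ n * n.factorial, by positivity, ?_⟩
  intro x hx
  rcases le_total x 1 with h | h
  · have h1 : x ^ ((n:ℝ)/2) ≤ 1 := Real.rpow_le_one hx h (by positivity)
    have h2 : Real.exp (-x) ≤ 1 := by rw [Real.exp_le_one_iff]; linarith
    have h3 : (0:ℝ) < 2 ^ n * n.factorial := by positivity
    nlinarith [Real.exp_pos (-x), Real.rpow_nonneg hx ((n:ℝ)/2)]
  · have h1 : x ^ ((n:ℝ)/2) ≤ x ^ ((n:ℝ)) := by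
      refine Real.rpow_le_rpow_of_exponent_le h ?_
      have : (0:ℝ) ≤ n := Nat.cast_nonneg n
      linarith
    rw [Real.rpow_natCast] at h1
    have h2 := pow_mul_exp_neg_le n (by linarith : (0:ℝ) ≤ x)
    have h3 : Real.exp (-(x/2)) ≤ 1 := by rw [Real.exp_le_one_iff]; linarith
    have h4 : (0:ℝ) < 2 ^ n * n.factorial := by positivity
    calc x ^ ((n:ℝ)/2) * Real.exp (-x) ≤ x ^ n * Real.exp (-x) :=
          mul_le_mul_of_nonneg_right h1 (Real.exp_pos _).le
      _ ≤ 2 ^ n * n.factorial * Real.exp (-(x/2)) := h2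
      _ ≤ 2 ^ n * n.factorial := by nlinarith
      _ ≤ 1 + 2 ^ n * n.factorial := by linarith

lemma gauss_absorb (n : ℕ) (q : ℝ) : ∃ C : ℝ, 0 < C ∧ ∀ (r U : ℝ), 0 < r → 0 < U →
    U ^ (-(n:ℝ)/2 - q) * Real.exp (-(r ^ 2 / (8 * U))) ≤ C * (r ^ n)⁻¹ * U ^ (-q) := by
  obtain ⟨D, hD, hbd⟩ := rpow_half_exp_le n
  refine ⟨D * 8 ^ ((n:ℝ)/2), by positivity, ?_⟩
  intro r U hr hU
  set x := r ^ 2 / (8 * U) with hxdef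
  have hx0 : 0 < x := by positivity
  have h2 : Real.exp (-x) ≤ D * x ^ (-((n:ℝ)/2)) := by
    have h1 := hbd x hx0.le
    rw [show -((n:ℝ)/2) = -((n:ℝ)/2) from rfl, Real.rpow_neg hx0.le]
    rw [mul_comm D _, ← div_eq_inv_mul, le_div_iff₀ (Real.rpow_pos_of_pos hx0 _)]
    linarith [h1]
  have h3 : x ^ (-((n:ℝ)/2)) = (r ^ 2) ^ (-((n:ℝ)/2)) * (8 * U) ^ ((n:ℝ)/2) := by
    rw [hxdef, Real.div_rpow (by positivity) (by positivity),
      Real.rpow_neg (by positivity : (0:ℝ) ≤ 8 * U), div_eq_mul_inv, inv_inv]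
  have h4 : (r ^ 2) ^ (-((n:ℝ)/2)) = (r ^ n)⁻¹ := by
    rw [← Real.rpow_natCast r 2, ← Real.rpow_mul hr.le,
      show ((2:ℕ):ℝ) * -((n:ℝ)/2) = -(n:ℝ) from by push_cast; ring, Real.rpow_neg hr.le,
      Real.rpow_natCast]
  have h5 : (8 * U) ^ ((n:ℝ)/2) = 8 ^ ((n:ℝ)/2) * U ^ ((n:ℝ)/2) :=
    Real.mul_rpow (by norm_num) hU.le
  have h7 : U ^ (-(n:ℝ)/2 - q) * U ^ ((n:ℝ)/2) = U ^ (-q) := by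
    rw [← Real.rpow_add hU]; congr 1; ring
  calc U ^ (-(n:ℝ)/2 - q) * Real.exp (-x)
      ≤ U ^ (-(n:ℝ)/2 - q) * (D * x ^ (-((n:ℝ)/2))) :=
        mul_le_mul_of_nonneg_left h2 (Real.rpow_nonneg hU.le _)
    _ = D * 8 ^ ((n:ℝ)/2) * (r ^ n)⁻¹ * (U ^ (-(n:ℝ)/2 - q) * U ^ ((n:ℝ)/2)) := by
        rw [h3, h4, h5]; ring
    _ = D * 8 ^ ((n:ℝ)/2) * (r ^ n)⁻¹ * U ^ (-q) := by rw [h7]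

lemma Hbound_i (n : ℕ) (hn : 1 ≤ n) {α : ℝ} (hα : 0 < α) : ∃ C : ℝ, 0 < C ∧
    ∀ (z : EuclideanSpace ℝ (Fin n)), z ≠ 0 → ∀ u : ℝ, 0 < u →
      |weylDeriv α (weylDeriv α (fun v => heatKernel n v z)) u|
        ≤ C * (‖z‖ ^ n)⁻¹ * u ^ (-(2 * α)) := by
  set M : ℕ := ⌊α⌋₊ + 1 with hM
  set Γi : ℝ := (Real.Gamma (((⌊α⌋₊ : ℝ) + 1) - α))⁻¹ with hΓi
  have hΓ : 0 < Γi := Gamma_inv_pos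
  obtain ⟨CM, hCM, hbdM⟩ := heat_deriv_bound n (M + M)
  obtain ⟨CG, hCG, hbdG⟩ := gauss_absorb n ((M + M : ℕ) : ℝ)
  have hfl := Nat.floor_le hα.le
  have hflt := Nat.lt_floor_add_one α
  have hdal1 : 0 < dal α + 1 := by unfold dal; linarith
  have hMcast : ((M:ℕ) : ℝ) = (⌊α⌋₊ : ℝ) + 1 := by rw [hM]; push_cast; ring
  have hMge : (1:ℝ) ≤ (M : ℝ) := by
    rw [hMcast]
    have : (0:ℝ) ≤ (⌊α⌋₊ : ℝ) := Nat.cast_nonneg _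
    linarith
  have hdalM : dal α + 1 < ((M + M : ℕ) : ℝ) := by
    unfold dal; push_cast; linarith
  have hdalMα : dal α + 1 < (M : ℝ) + α := by
    unfold dal; rw [hMcast]; linarith
  set K₁ : ℝ := 1 / (dal α + 1) + 1 / (((M + M : ℕ) : ℝ) - dal α - 1) with hK₁
  set K₂ : ℝ := 1 / (dal α + 1) + 1 / (((M : ℝ) + α) - dal α - 1) with hK₂
  have hK₁pos : 0 < K₁ := by
    rw [hK₁]
    have h1 : 0 < ((M + M : ℕ) : ℝ) - dal α - 1 := by linarith
    positivity
  have hK₂pos : 0 < K₂ := by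
    rw [hK₂]
    have h1 : 0 < ((M : ℝ) + α) - dal α - 1 := by linarith
    positivity
  refine ⟨Γi ^ 2 * CM * CG * K₁ * K₂, by positivity, ?_⟩
  intro z hz u hu
  set r : ℝ := ‖z‖ with hr
  have hr0 : 0 < r := norm_pos_iff.mpr hz
  -- Step 1: bound on |Gk M x|
  have hGk : ∀ x : ℝ, 0 < x → |Gk n α z M x|
      ≤ CM * CG * (r ^ n)⁻¹ * K₁ * x ^ (dal α + 1 - ((M + M : ℕ) : ℝ)) := by
    intro x hx
    have habs : |Gk n α z M x| ≤ ∫ v in Ioi (0:ℝ),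
        |v ^ dal α * iteratedDeriv (⌊α⌋₊ + 1 + M) (fun u => heatKernel n u z) (x + v)| := by
      rw [← Real.norm_eq_abs]
      refine (norm_integral_le_integral_norm _).trans_eq ?_
      congr 1
    have hmono : ∫ v in Ioi (0:ℝ),
        |v ^ dal α * iteratedDeriv (⌊α⌋₊ + 1 + M) (fun u => heatKernel n u z) (x + v)|
        ≤ ∫ v in Ioi (0:ℝ), (CM * CG * (r ^ n)⁻¹) *
            (v ^ dal α * (x + v) ^ (-((M + M : ℕ) : ℝ))) := by
      refine integral_mono_of_nonneg (Eventually.of_forall fun v => abs_nonneg _)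
        (((C1 (dal_neg1 hα.le) hdalM hx).1).const_mul _) ?_
      filter_upwards [ae_restrict_mem measurableSet_Ioi] with v hv
      have hv0 : (0:ℝ) < v := hv
      have hxv : (0:ℝ) < x + v := by linarith
      rw [abs_mul, abs_of_nonneg (Real.rpow_nonneg hv0.le _)]
      have hb : |iteratedDeriv (⌊α⌋₊ + 1 + M) (fun u => heatKernel n u z) (x + v)|
          ≤ CM * ((x + v) ^ (-(n:ℝ)/2 - ((M + M : ℕ) : ℝ)) *
              Real.exp (-(‖z‖ ^ 2 / (8 * (x + v))))) := by
        exact hbdM z (x + v) hxv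
      have hg := hbdG r (x + v) hr0 hxv
      calc v ^ dal α * |iteratedDeriv (⌊α⌋₊ + 1 + M) (fun u => heatKernel n u z) (x + v)|
          ≤ v ^ dal α * (CM * (CG * (r ^ n)⁻¹ * (x + v) ^ (-((M + M : ℕ) : ℝ)))) := by
            refine mul_le_mul_of_nonneg_left ?_ (Real.rpow_nonneg hv0.le _)
            refine hb.trans ?_
            refine mul_le_mul_of_nonneg_left ?_ hCM.le
            exact hg
        _ = CM * CG * (r ^ n)⁻¹ * (v ^ dal α * (x + v) ^ (-((M + M : ℕ) : ℝ))) := by ring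
    have hval : ∫ v in Ioi (0:ℝ), (CM * CG * (r ^ n)⁻¹) *
        (v ^ dal α * (x + v) ^ (-((M + M : ℕ) : ℝ)))
        ≤ CM * CG * (r ^ n)⁻¹ * K₁ * x ^ (dal α + 1 - ((M + M : ℕ) : ℝ)) := by
      rw [MeasureTheory.integral_const_mul]
      have h1 := (C1 (dal_neg1 hα.le) hdalM hx).2
      calc (CM * CG * (r ^ n)⁻¹) * ∫ v in Ioi (0:ℝ), v ^ dal α * (x + v) ^ (-((M + M : ℕ) : ℝ))
          ≤ (CM * CG * (r ^ n)⁻¹) * (K₁ * x ^ (dal α + 1 - ((M + M : ℕ) : ℝ))) := by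
            refine mul_le_mul_of_nonneg_left ?_ (by positivity)
            rw [hK₁]
            exact h1
        _ = CM * CG * (r ^ n)⁻¹ * K₁ * x ^ (dal α + 1 - ((M + M : ℕ) : ℝ)) := by ring
    exact habs.trans (hmono.trans hval)
  -- Step 2: bound on |H u|
  have hH := weyl_abs_le α (weylDeriv α (fun v => heatKernel n v z)) u
  have hcongr : ∫ w in Ioi (0:ℝ), |w ^ dal α *
      iteratedDeriv (⌊α⌋₊ + 1) (weylDeriv α (fun v => heatKernel n v z)) (u + w)|
      = ∫ w in Ioi (0:ℝ), Γi * (w ^ dal α * |Gk n α z M (u + w)|) := by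
    refine setIntegral_congr_fun measurableSet_Ioi ?_
    intro w hw
    show |w ^ dal α * iteratedDeriv (⌊α⌋₊ + 1)
        (weylDeriv α fun v => heatKernel n v z) (u + w)|
      = Γi * (w ^ dal α * |Gk n α z M (u + w)|)
    have hw0 : (0:ℝ) < w := hw
    have huw : u + w ∈ Ioi (0:ℝ) := by simp only [mem_Ioi]; linarith
    rw [weylHeat_iteratedDeriv n hn hα z huw]
    rw [abs_mul, abs_mul, abs_of_nonneg (Real.rpow_nonneg hw0.le _), abs_of_nonneg hΓ.le]
    ring
  have hmono2 : ∫ w in Ioi (0:ℝ), Γi * (w ^ dal α * |Gk n α z M (u + w)|)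
      ≤ ∫ w in Ioi (0:ℝ), (Γi * (CM * CG * (r ^ n)⁻¹ * K₁)) *
          (w ^ dal α * (u + w) ^ (-((M : ℝ) + α))) := by
    refine integral_mono_of_nonneg
      (by
        filter_upwards [ae_restrict_mem measurableSet_Ioi] with w hw
        have hw0 : (0:ℝ) < w := hw
        positivity)
      (((C1 (dal_neg1 hα.le) hdalMα hu).1).const_mul _) ?_
    filter_upwards [ae_restrict_mem measurableSet_Ioi] with w hw
    have hw0 : (0:ℝ) < w := hw
    have huw : (0:ℝ) < u + w := by linarith
    have h1 := hGk (u + w) huw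
    have hexpid : (u + w) ^ (dal α + 1 - ((M + M : ℕ) : ℝ)) = (u + w) ^ (-((M : ℝ) + α)) := by
      congr 1
      unfold dal
      rw [hM]
      push_cast
      ring
    rw [hexpid] at h1
    calc Γi * (w ^ dal α * |Gk n α z M (u + w)|)
        ≤ Γi * (w ^ dal α * (CM * CG * (r ^ n)⁻¹ * K₁ * (u + w) ^ (-((M : ℝ) + α)))) := by
          refine mul_le_mul_of_nonneg_left ?_ hΓ.le
          exact mul_le_mul_of_nonneg_left h1 (Real.rpow_nonneg hw0.le _)
      _ = (Γi * (CM * CG * (r ^ n)⁻¹ * K₁)) * (w ^ dal α * (u + w) ^ (-((M : ℝ) + α))) := by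
          ring
  have hval2 : ∫ w in Ioi (0:ℝ), (Γi * (CM * CG * (r ^ n)⁻¹ * K₁)) *
      (w ^ dal α * (u + w) ^ (-((M : ℝ) + α)))
      ≤ (Γi * (CM * CG * (r ^ n)⁻¹ * K₁)) * (K₂ * u ^ (dal α + 1 - ((M : ℝ) + α))) := by
    rw [MeasureTheory.integral_const_mul]
    refine mul_le_mul_of_nonneg_left ?_ (by positivity)
    rw [hK₂]
    exact (C1 (dal_neg1 hα.le) hdalMα hu).2
  have hexp2 : u ^ (dal α + 1 - ((M : ℝ) + α)) = u ^ (-(2 * α)) := by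
    congr 1
    unfold dal
    rw [hMcast]
    ring
  calc |weylDeriv α (weylDeriv α (fun v => heatKernel n v z)) u|
      ≤ Γi * ∫ w in Ioi (0:ℝ), |w ^ dal α *
          iteratedDeriv (⌊α⌋₊ + 1) (weylDeriv α (fun v => heatKernel n v z)) (u + w)| := hH
    _ ≤ Γi * ((Γi * (CM * CG * (r ^ n)⁻¹ * K₁)) * (K₂ * u ^ (dal α + 1 - ((M : ℝ) + α)))) := by
        rw [hcongr]
        exact mul_le_mul_of_nonneg_left (hmono2.trans hval2) hΓ.le
    _ = Γi ^ 2 * CM * CG * K₁ * K₂ * (r ^ n)⁻¹ * u ^ (dal α + 1 - ((M : ℝ) + α)) := by ring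
    _ = Γi ^ 2 * CM * CG * K₁ * K₂ * (‖z‖ ^ n)⁻¹ * u ^ (-(2 * α)) := by rw [hexp2, hr]

lemma gauss_lintegral (n : ℕ) {U : ℝ} (hU : 0 < U) :
    ∫⁻ z : EuclideanSpace ℝ (Fin n), ENNReal.ofReal (Real.exp (-(‖z‖ ^ 2 / (8 * U))))
      = ENNReal.ofReal ((8 * Real.pi * U) ^ ((n:ℝ)/2)) := by
  have hb : (0:ℝ) < (8 * U)⁻¹ := by positivity
  have hfun : ∀ z : EuclideanSpace ℝ (Fin n),
      Real.exp (-(‖z‖ ^ 2 / (8 * U))) = Real.exp (-(8 * U)⁻¹ * ‖z‖ ^ 2) := by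
    intro z; congr 1; field_simp
  have hInt : Integrable (fun z : EuclideanSpace ℝ (Fin n) =>
      Real.exp (-(8 * U)⁻¹ * ‖z‖ ^ 2)) := by
    have h0 := (GaussianFourier.integrable_cexp_neg_mul_sq_norm_add
      (b := (((8 * U)⁻¹ : ℝ) : ℂ)) (by simpa using hb) 0 (0 : EuclideanSpace ℝ (Fin n)))
    have h1 := h0.norm
    refine h1.congr (Eventually.of_forall fun v => ?_)
    simp only [Complex.norm_exp]
    congr 1
    simp [← Complex.ofReal_pow]
  have hval : ∫ z : EuclideanSpace ℝ (Fin n), Real.exp (-(8 * U)⁻¹ * ‖z‖ ^ 2)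
      = (Real.pi / (8 * U)⁻¹) ^ ((n:ℝ)/2) := by
    have h2 := GaussianFourier.integral_rexp_neg_mul_sq_norm
      (V := EuclideanSpace ℝ (Fin n)) hb
    rw [h2, finrank_euclideanSpace_fin]
  calc ∫⁻ z : EuclideanSpace ℝ (Fin n), ENNReal.ofReal (Real.exp (-(‖z‖ ^ 2 / (8 * U))))
      = ∫⁻ z : EuclideanSpace ℝ (Fin n), ENNReal.ofReal (Real.exp (-(8 * U)⁻¹ * ‖z‖ ^ 2)) :=
        lintegral_congr fun z => by rw [hfun z]
    _ = ENNReal.ofReal (∫ z : EuclideanSpace ℝ (Fin n), Real.exp (-(8 * U)⁻¹ * ‖z‖ ^ 2)) :=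
        (ofReal_integral_eq_lintegral_ofReal hInt
          (Eventually.of_forall fun z => (Real.exp_pos _).le)).symm
    _ = ENNReal.ofReal ((8 * Real.pi * U) ^ ((n:ℝ)/2)) := by
        rw [hval]
        congr 1
        rw [div_eq_mul_inv, inv_inv]
        congr 1
        ring

lemma H_le (n : ℕ) (hn : 1 ≤ n) {α : ℝ} (hα : 0 < α) (z : EuclideanSpace ℝ (Fin n))
    {u : ℝ} (hu : 0 < u) :
    |weylDeriv α (weylDeriv α (fun v => heatKernel n v z)) u|
      ≤ ((Real.Gamma (((⌊α⌋₊ : ℝ) + 1) - α))⁻¹) ^ 2 *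
        ∫ w in Ioi (0:ℝ), w ^ dal α * |Gk n α z (⌊α⌋₊ + 1) (u + w)| := by
  set Γi : ℝ := (Real.Gamma (((⌊α⌋₊ : ℝ) + 1) - α))⁻¹ with hΓi
  have hΓ : 0 < Γi := Gamma_inv_pos
  have hH := weyl_abs_le α (weylDeriv α (fun v => heatKernel n v z)) u
  have hcongr : ∫ w in Ioi (0:ℝ), |w ^ dal α *
      iteratedDeriv (⌊α⌋₊ + 1) (weylDeriv α (fun v => heatKernel n v z)) (u + w)|
      = ∫ w in Ioi (0:ℝ), Γi * (w ^ dal α * |Gk n α z (⌊α⌋₊ + 1) (u + w)|) := by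
    refine setIntegral_congr_fun measurableSet_Ioi ?_
    intro w hw
    show |w ^ dal α * iteratedDeriv (⌊α⌋₊ + 1)
        (weylDeriv α fun v => heatKernel n v z) (u + w)|
      = Γi * (w ^ dal α * |Gk n α z (⌊α⌋₊ + 1) (u + w)|)
    have hw0 : (0:ℝ) < w := hw
    have huw : u + w ∈ Ioi (0:ℝ) := by simp only [mem_Ioi]; linarith
    rw [weylHeat_iteratedDeriv n hn hα z huw]
    rw [abs_mul, abs_mul, abs_of_nonneg (Real.rpow_nonneg hw0.le _), abs_of_nonneg hΓ.le]
    ring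
  rw [hcongr, MeasureTheory.integral_const_mul] at hH
  calc |weylDeriv α (weylDeriv α (fun v => heatKernel n v z)) u|
      ≤ Γi * (Γi * ∫ w in Ioi (0:ℝ), w ^ dal α * |Gk n α z (⌊α⌋₊ + 1) (u + w)|) := hH
    _ = Γi ^ 2 * ∫ w in Ioi (0:ℝ), w ^ dal α * |Gk n α z (⌊α⌋₊ + 1) (u + w)| := by ring

lemma Hbound_ii (n : ℕ) (hn : 1 ≤ n) {α : ℝ} (hα : 0 < α) : ∃ C : ℝ, 0 < C ∧
    ∀ (z : EuclideanSpace ℝ (Fin n)) (u : ℝ), 0 < u →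
      ENNReal.ofReal |weylDeriv α (weylDeriv α (fun v => heatKernel n v z)) u|
        ≤ ENNReal.ofReal C *
          ∫⁻ w in Ioi (0:ℝ), ∫⁻ v in Ioi (0:ℝ),
            ENNReal.ofReal (w ^ dal α * (v ^ dal α *
              ((u + w + v) ^ (-(n:ℝ)/2 - ((⌊α⌋₊ + 1 + (⌊α⌋₊ + 1) : ℕ) : ℝ)) *
                Real.exp (-(‖z‖ ^ 2 / (8 * (u + w + v))))))) := by
  set M : ℕ := ⌊α⌋₊ + 1 with hM
  set Γi : ℝ := (Real.Gamma (((⌊α⌋₊ : ℝ) + 1) - α))⁻¹ with hΓi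
  have hΓ : 0 < Γi := Gamma_inv_pos
  obtain ⟨CM, hCM, hbdM⟩ := heat_deriv_bound n (M + M)
  refine ⟨Γi ^ 2 * CM, by positivity, ?_⟩
  intro z u hu
  -- bound on Gk in ofReal form
  have hGk2 : ∀ x : ℝ, 0 < x → ENNReal.ofReal (|Gk n α z M x|)
      ≤ ENNReal.ofReal CM * ∫⁻ v in Ioi (0:ℝ),
          ENNReal.ofReal (v ^ dal α * ((x + v) ^ (-(n:ℝ)/2 - ((M + M : ℕ) : ℝ)) *
            Real.exp (-(‖z‖ ^ 2 / (8 * (x + v)))))) := by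
    intro x hx
    have habs : |Gk n α z M x| ≤ ∫ v in Ioi (0:ℝ),
        |v ^ dal α * iteratedDeriv (⌊α⌋₊ + 1 + M) (fun u => heatKernel n u z) (x + v)| := by
      rw [← Real.norm_eq_abs]
      refine (norm_integral_le_integral_norm _).trans_eq ?_
      congr 1
    calc ENNReal.ofReal (|Gk n α z M x|)
        ≤ ENNReal.ofReal (∫ v in Ioi (0:ℝ),
            |v ^ dal α * iteratedDeriv (⌊α⌋₊ + 1 + M) (fun u => heatKernel n u z) (x + v)|) :=
          ENNReal.ofReal_le_ofReal habs
      _ ≤ ∫⁻ v in Ioi (0:ℝ), ENNReal.ofReal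
            (|v ^ dal α * iteratedDeriv (⌊α⌋₊ + 1 + M) (fun u => heatKernel n u z) (x + v)|) :=
          ofReal_integral_le _ _
      _ ≤ ∫⁻ v in Ioi (0:ℝ), ENNReal.ofReal CM * ENNReal.ofReal
            (v ^ dal α * ((x + v) ^ (-(n:ℝ)/2 - ((M + M : ℕ) : ℝ)) *
              Real.exp (-(‖z‖ ^ 2 / (8 * (x + v)))))) := by
          refine lintegral_mono_ae ?_
          filter_upwards [ae_restrict_mem measurableSet_Ioi] with v hv
          have hv0 : (0:ℝ) < v := hv
          have hxv : (0:ℝ) < x + v := by linarith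
          rw [← ENNReal.ofReal_mul hCM.le]
          refine ENNReal.ofReal_le_ofReal ?_
          rw [abs_mul, abs_of_nonneg (Real.rpow_nonneg hv0.le _)]
          calc v ^ dal α * |iteratedDeriv (⌊α⌋₊ + 1 + M) (fun u => heatKernel n u z) (x + v)|
              ≤ v ^ dal α * (CM * ((x + v) ^ (-(n:ℝ)/2 - ((M + M : ℕ) : ℝ)) *
                  Real.exp (-(‖z‖ ^ 2 / (8 * (x + v)))))) :=
                mul_le_mul_of_nonneg_left (hbdM z (x + v) hxv) (Real.rpow_nonneg hv0.le _)
            _ = CM * (v ^ dal α * ((x + v) ^ (-(n:ℝ)/2 - ((M + M : ℕ) : ℝ)) *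
                  Real.exp (-(‖z‖ ^ 2 / (8 * (x + v)))))) := by ring
      _ = ENNReal.ofReal CM * ∫⁻ v in Ioi (0:ℝ), ENNReal.ofReal
            (v ^ dal α * ((x + v) ^ (-(n:ℝ)/2 - ((M + M : ℕ) : ℝ)) *
              Real.exp (-(‖z‖ ^ 2 / (8 * (x + v)))))) :=
          lintegral_const_mul' _ _ ENNReal.ofReal_ne_top
  -- main chain
  have h1 := H_le n hn hα z hu
  calc ENNReal.ofReal (|weylDeriv α (weylDeriv α (fun v => heatKernel n v z)) u|)
      ≤ ENNReal.ofReal (Γi ^ 2 *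
          ∫ w in Ioi (0:ℝ), w ^ dal α * |Gk n α z M (u + w)|) :=
        ENNReal.ofReal_le_ofReal h1
    _ ≤ ENNReal.ofReal (Γi ^ 2) * ENNReal.ofReal
          (∫ w in Ioi (0:ℝ), w ^ dal α * |Gk n α z M (u + w)|) :=
        (ENNReal.ofReal_mul (by positivity : (0:ℝ) ≤ Γi ^ 2)).le
    _ ≤ ENNReal.ofReal (Γi ^ 2) * ∫⁻ w in Ioi (0:ℝ),
          ENNReal.ofReal (w ^ dal α * |Gk n α z M (u + w)|) :=
        mul_le_mul_right (ofReal_integral_le _ _) _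
    _ ≤ ENNReal.ofReal (Γi ^ 2) * ∫⁻ w in Ioi (0:ℝ), ENNReal.ofReal CM *
          (∫⁻ v in Ioi (0:ℝ), ENNReal.ofReal (w ^ dal α * (v ^ dal α *
            ((u + w + v) ^ (-(n:ℝ)/2 - ((M + M : ℕ) : ℝ)) *
              Real.exp (-(‖z‖ ^ 2 / (8 * (u + w + v)))))))) := by
        refine mul_le_mul_right (lintegral_mono_ae ?_) _
        filter_upwards [ae_restrict_mem measurableSet_Ioi] with w hw
        have hw0 : (0:ℝ) < w := hw
        have huw : (0:ℝ) < u + w := by linarith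
        calc ENNReal.ofReal (w ^ dal α * |Gk n α z M (u + w)|)
            = ENNReal.ofReal (w ^ dal α) * ENNReal.ofReal (|Gk n α z M (u + w)|) :=
              ENNReal.ofReal_mul (Real.rpow_nonneg hw0.le _)
          _ ≤ ENNReal.ofReal (w ^ dal α) * (ENNReal.ofReal CM * ∫⁻ v in Ioi (0:ℝ),
                ENNReal.ofReal (v ^ dal α * (((u + w) + v) ^ (-(n:ℝ)/2 - ((M + M : ℕ) : ℝ)) *
                  Real.exp (-(‖z‖ ^ 2 / (8 * ((u + w) + v))))))) :=
              mul_le_mul_right (hGk2 (u + w) huw) _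
          _ = ENNReal.ofReal CM * (ENNReal.ofReal (w ^ dal α) * ∫⁻ v in Ioi (0:ℝ),
                ENNReal.ofReal (v ^ dal α * (((u + w) + v) ^ (-(n:ℝ)/2 - ((M + M : ℕ) : ℝ)) *
                  Real.exp (-(‖z‖ ^ 2 / (8 * ((u + w) + v))))))) := by ring
          _ = ENNReal.ofReal CM * ∫⁻ v in Ioi (0:ℝ), ENNReal.ofReal (w ^ dal α) *
                ENNReal.ofReal (v ^ dal α * (((u + w) + v) ^ (-(n:ℝ)/2 - ((M + M : ℕ) : ℝ)) *
                  Real.exp (-(‖z‖ ^ 2 / (8 * ((u + w) + v)))))) := by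
              rw [lintegral_const_mul' _ _ ENNReal.ofReal_ne_top]
          _ = ENNReal.ofReal CM * ∫⁻ v in Ioi (0:ℝ),
                ENNReal.ofReal (w ^ dal α * (v ^ dal α *
                  ((u + w + v) ^ (-(n:ℝ)/2 - ((M + M : ℕ) : ℝ)) *
                    Real.exp (-(‖z‖ ^ 2 / (8 * (u + w + v))))))) := by
              congr 1
              refine lintegral_congr fun v => ?_
              rw [← ENNReal.ofReal_mul (Real.rpow_nonneg hw0.le _)]
    _ = ENNReal.ofReal (Γi ^ 2) * (ENNReal.ofReal CM * ∫⁻ w in Ioi (0:ℝ),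
          (∫⁻ v in Ioi (0:ℝ), ENNReal.ofReal (w ^ dal α * (v ^ dal α *
            ((u + w + v) ^ (-(n:ℝ)/2 - ((M + M : ℕ) : ℝ)) *
              Real.exp (-(‖z‖ ^ 2 / (8 * (u + w + v)))))))) ) := by
        rw [lintegral_const_mul' _ _ ENNReal.ofReal_ne_top]
    _ = ENNReal.ofReal (Γi ^ 2 * CM) * ∫⁻ w in Ioi (0:ℝ),
          (∫⁻ v in Ioi (0:ℝ), ENNReal.ofReal (w ^ dal α * (v ^ dal α *
            ((u + w + v) ^ (-(n:ℝ)/2 - ((M + M : ℕ) : ℝ)) *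
              Real.exp (-(‖z‖ ^ 2 / (8 * (u + w + v)))))))) := by
        rw [ENNReal.ofReal_mul (by positivity : (0:ℝ) ≤ Γi ^ 2), mul_assoc]

lemma Jz_bound (n : ℕ) (hn : 1 ≤ n) {α : ℝ} (hα : 0 < α) : ∃ C : ℝ, 0 < C ∧
    ∀ u : ℝ, 0 < u →
      ∫⁻ z : EuclideanSpace ℝ (Fin n), ∫⁻ w in Ioi (0:ℝ), ∫⁻ v in Ioi (0:ℝ),
        ENNReal.ofReal (w ^ dal α * (v ^ dal α *
          ((u + w + v) ^ (-(n:ℝ)/2 - ((⌊α⌋₊ + 1 + (⌊α⌋₊ + 1) : ℕ) : ℝ)) *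
            Real.exp (-(‖z‖ ^ 2 / (8 * (u + w + v)))))))
      ≤ ENNReal.ofReal (C * u ^ (-(2 * α))) := by
  set M : ℕ := ⌊α⌋₊ + 1 with hM
  set Q : ℝ := -(n:ℝ)/2 - ((M + M : ℕ) : ℝ) with hQ
  set P2 : ℝ := ((M + M : ℕ) : ℝ) with hP2
  set c8 : ℝ := (8 * Real.pi) ^ ((n:ℝ)/2) with hc8
  have hc8pos : 0 < c8 := by rw [hc8]; positivity
  have hfl := Nat.floor_le hα.le
  have hflt := Nat.lt_floor_add_one α
  have hdal1 : 0 < dal α + 1 := by unfold dal; linarith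
  have hMcast : ((M:ℕ) : ℝ) = (⌊α⌋₊ : ℝ) + 1 := by rw [hM]; push_cast; ring
  have hMge : (1:ℝ) ≤ (M : ℝ) := by
    rw [hMcast]
    have : (0:ℝ) ≤ (⌊α⌋₊ : ℝ) := Nat.cast_nonneg _
    linarith
  have hdalM : dal α + 1 < P2 := by
    rw [hP2]; unfold dal; push_cast; linarith
  have hdalMα : dal α + 1 < (M : ℝ) + α := by
    unfold dal; rw [hMcast]; linarith
  set K₁ : ℝ := 1 / (dal α + 1) + 1 / (P2 - dal α - 1) with hK₁
  set K₂ : ℝ := 1 / (dal α + 1) + 1 / (((M : ℝ) + α) - dal α - 1) with hK₂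
  have hK₁pos : 0 < K₁ := by
    rw [hK₁]
    have h1 : 0 < P2 - dal α - 1 := by linarith
    positivity
  have hK₂pos : 0 < K₂ := by
    rw [hK₂]
    have h1 : 0 < ((M : ℝ) + α) - dal α - 1 := by linarith
    positivity
  refine ⟨c8 * K₁ * K₂, by positivity, ?_⟩
  intro u hu
  set f : EuclideanSpace ℝ (Fin n) → ℝ → ℝ → ℝ≥0∞ := fun z w v =>
    ENNReal.ofReal (w ^ dal α * (v ^ dal α *
      ((u + w + v) ^ Q * Real.exp (-(‖z‖ ^ 2 / (8 * (u + w + v))))))) with hf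
  have hf_meas : Measurable (fun q : (EuclideanSpace ℝ (Fin n) × ℝ) × ℝ =>
      f q.1.1 q.1.2 q.2) := by
    rw [hf]
    fun_prop
  -- innermost z-integral
  have key : ∀ w ∈ Ioi (0:ℝ), ∀ v ∈ Ioi (0:ℝ),
      (∫⁻ z : EuclideanSpace ℝ (Fin n), f z w v)
        = ENNReal.ofReal ((c8 * w ^ dal α) * (v ^ dal α * (u + w + v) ^ (-P2))) := by
    intro w hw v hv
    have hw0 : (0:ℝ) < w := hw
    have hv0 : (0:ℝ) < v := hv
    set U : ℝ := u + w + v with hU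
    have hU0 : 0 < U := by rw [hU]; linarith
    have hcst : (0:ℝ) ≤ w ^ dal α * (v ^ dal α * U ^ Q) := by positivity
    have hsplit : ∀ z : EuclideanSpace ℝ (Fin n), f z w v
        = ENNReal.ofReal (w ^ dal α * (v ^ dal α * U ^ Q)) *
            ENNReal.ofReal (Real.exp (-(‖z‖ ^ 2 / (8 * U)))) := by
      intro z
      rw [hf, ← ENNReal.ofReal_mul hcst]
      congr 1
      rw [hU]
      ring
    calc ∫⁻ z : EuclideanSpace ℝ (Fin n), f z w v
        = ∫⁻ z : EuclideanSpace ℝ (Fin n),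
            ENNReal.ofReal (w ^ dal α * (v ^ dal α * U ^ Q)) *
              ENNReal.ofReal (Real.exp (-(‖z‖ ^ 2 / (8 * U)))) :=
          lintegral_congr fun z => hsplit z
      _ = ENNReal.ofReal (w ^ dal α * (v ^ dal α * U ^ Q)) *
            ∫⁻ z : EuclideanSpace ℝ (Fin n),
              ENNReal.ofReal (Real.exp (-(‖z‖ ^ 2 / (8 * U)))) :=
          lintegral_const_mul' _ _ ENNReal.ofReal_ne_top
      _ = ENNReal.ofReal (w ^ dal α * (v ^ dal α * U ^ Q)) *
            ENNReal.ofReal ((8 * Real.pi * U) ^ ((n:ℝ)/2)) := by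
          rw [gauss_lintegral n hU0]
      _ = ENNReal.ofReal ((c8 * w ^ dal α) * (v ^ dal α * U ^ (-P2))) := by
          rw [← ENNReal.ofReal_mul hcst]
          congr 1
          have hsplit8 : (8 * Real.pi * U) ^ ((n:ℝ)/2) = c8 * U ^ ((n:ℝ)/2) := by
            rw [hc8]
            exact Real.mul_rpow (by positivity) hU0.le
          have hUQ : U ^ Q * U ^ ((n:ℝ)/2) = U ^ (-P2) := by
            rw [← Real.rpow_add hU0]
            congr 1
            rw [hQ]
            ring
          calc w ^ dal α * (v ^ dal α * U ^ Q) * ((8 * Real.pi * U) ^ ((n:ℝ)/2))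
              = c8 * w ^ dal α * (v ^ dal α * (U ^ Q * U ^ ((n:ℝ)/2))) := by
                rw [hsplit8]; ring
            _ = c8 * w ^ dal α * (v ^ dal α * U ^ (-P2)) := by rw [hUQ]
  -- the two swaps
  have hswap1 : ∫⁻ z : EuclideanSpace ℝ (Fin n), ∫⁻ w in Ioi (0:ℝ),
      ∫⁻ v in Ioi (0:ℝ), f z w v
      = ∫⁻ w in Ioi (0:ℝ), ∫⁻ z : EuclideanSpace ℝ (Fin n),
          ∫⁻ v in Ioi (0:ℝ), f z w v := by
    refine lintegral_lintegral_swap ?_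
    exact (Measurable.lintegral_prod_right' hf_meas).aemeasurable
  have hswap2 : ∀ w : ℝ, (∫⁻ z : EuclideanSpace ℝ (Fin n), ∫⁻ v in Ioi (0:ℝ), f z w v)
      = ∫⁻ v in Ioi (0:ℝ), ∫⁻ z : EuclideanSpace ℝ (Fin n), f z w v := by
    intro w
    refine lintegral_lintegral_swap ?_
    have h1 : Measurable (fun q : EuclideanSpace ℝ (Fin n) × ℝ => f q.1 w q.2) :=
      hf_meas.comp ((measurable_fst.prodMk measurable_const).prodMk measurable_snd)
    exact h1.aemeasurable
  rw [hswap1]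
  have hfinal : ∫⁻ w in Ioi (0:ℝ), ∫⁻ z : EuclideanSpace ℝ (Fin n),
      ∫⁻ v in Ioi (0:ℝ), f z w v
      ≤ ∫⁻ w in Ioi (0:ℝ), ENNReal.ofReal ((c8 * K₁) * (w ^ dal α *
          (u + w) ^ (-((M:ℝ) + α)))) := by
    refine lintegral_mono_ae ?_
    filter_upwards [ae_restrict_mem measurableSet_Ioi] with w hw
    have hw0 : (0:ℝ) < w := hw
    have huw : (0:ℝ) < u + w := by linarith
    rw [hswap2 w]
    have hstep : ∫⁻ v in Ioi (0:ℝ), (∫⁻ z : EuclideanSpace ℝ (Fin n), f z w v)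
        = ENNReal.ofReal (c8 * w ^ dal α) *
            ∫⁻ v in Ioi (0:ℝ), ENNReal.ofReal (v ^ dal α * ((u + w) + v) ^ (-P2)) := by
      rw [← lintegral_const_mul' _ _ ENNReal.ofReal_ne_top]
      refine setLIntegral_congr_fun measurableSet_Ioi ?_
      intro v hv
      beta_reduce
      rw [key w hw v hv, ← ENNReal.ofReal_mul (by positivity : (0:ℝ) ≤ c8 * w ^ dal α)]
    rw [hstep]
    have hC1 := C1L (dal_neg1 hα.le) hdalM huw
    calc ENNReal.ofReal (c8 * w ^ dal α) *
          ∫⁻ v in Ioi (0:ℝ), ENNReal.ofReal (v ^ dal α * ((u + w) + v) ^ (-P2))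
        ≤ ENNReal.ofReal (c8 * w ^ dal α) *
            ENNReal.ofReal (K₁ * (u + w) ^ (dal α + 1 - P2)) := by
          refine mul_le_mul_right ?_ _
          refine le_trans ?_ hC1
          exact le_of_eq rfl
      _ = ENNReal.ofReal ((c8 * K₁) * (w ^ dal α * (u + w) ^ (-((M:ℝ) + α)))) := by
          rw [← ENNReal.ofReal_mul (by positivity : (0:ℝ) ≤ c8 * w ^ dal α)]
          congr 1
          have hexpid : (u + w) ^ (dal α + 1 - P2) = (u + w) ^ (-((M : ℝ) + α)) := by
            congr 1
            rw [hP2]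
            unfold dal
            rw [hM]
            push_cast
            ring
          rw [hexpid]
          ring
  refine hfinal.trans ?_
  have hlast : ∫⁻ w in Ioi (0:ℝ), ENNReal.ofReal ((c8 * K₁) * (w ^ dal α *
      (u + w) ^ (-((M:ℝ) + α))))
      = ENNReal.ofReal (c8 * K₁) *
          ∫⁻ w in Ioi (0:ℝ), ENNReal.ofReal (w ^ dal α * (u + w) ^ (-((M:ℝ) + α))) := by
    rw [← lintegral_const_mul' _ _ ENNReal.ofReal_ne_top]
    refine lintegral_congr fun w => ?_
    rw [← ENNReal.ofReal_mul (by positivity : (0:ℝ) ≤ c8 * K₁)]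
  rw [hlast]
  have hC2 := C1L (dal_neg1 hα.le) hdalMα hu
  calc ENNReal.ofReal (c8 * K₁) *
        ∫⁻ w in Ioi (0:ℝ), ENNReal.ofReal (w ^ dal α * (u + w) ^ (-((M:ℝ) + α)))
      ≤ ENNReal.ofReal (c8 * K₁) * ENNReal.ofReal (K₂ * u ^ (dal α + 1 - ((M:ℝ) + α))) :=
        mul_le_mul_right hC2 _
    _ ≤ ENNReal.ofReal (c8 * K₁ * K₂ * u ^ (-(2 * α))) := by
        rw [← ENNReal.ofReal_mul (by positivity : (0:ℝ) ≤ c8 * K₁)]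
        refine ENNReal.ofReal_le_ofReal (le_of_eq ?_)
        have hexp2 : u ^ (dal α + 1 - ((M : ℝ) + α)) = u ^ (-(2 * α)) := by
          congr 1
          unfold dal
          rw [hMcast]
          ring
        rw [hexp2]
        ring

lemma st_alg {α s t : ℝ} (hs : 0 < s) (ht : 0 < t) (X : ℝ) :
    (s * t) ^ α * X / t = s ^ α * t ^ (α - 1) * X := by
  rw [Real.mul_rpow hs.le ht.le, Real.rpow_sub_one ht.ne']
  field_simp

lemma t_integral_bound {α : ℝ} (hα : 0 < α) {s : ℝ} (hs : 0 < s) (c : ℝ) (hc : 0 ≤ c) :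
    ∫⁻ t in Ioi (0:ℝ), ENNReal.ofReal (s ^ α * t ^ (α - 1) * (c * (s + t) ^ (-(2 * α))))
      ≤ ENNReal.ofReal (c * (1/α + 1/α)) := by
  have hd : -1 < α - 1 := by linarith
  have hdp : (α - 1) + 1 < 2 * α := by linarith
  have hsplit : ∀ t : ℝ, s ^ α * t ^ (α - 1) * (c * (s + t) ^ (-(2 * α)))
      = (c * s ^ α) * (t ^ (α - 1) * (s + t) ^ (-(2 * α))) := by
    intro t; ring
  calc ∫⁻ t in Ioi (0:ℝ), ENNReal.ofReal (s ^ α * t ^ (α - 1) * (c * (s + t) ^ (-(2 * α))))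
      = ENNReal.ofReal (c * s ^ α) *
          ∫⁻ t in Ioi (0:ℝ), ENNReal.ofReal (t ^ (α - 1) * (s + t) ^ (-(2 * α))) := by
        rw [← lintegral_const_mul' _ _ ENNReal.ofReal_ne_top]
        refine lintegral_congr fun t => ?_
        rw [hsplit t, ENNReal.ofReal_mul (by positivity : (0:ℝ) ≤ c * s ^ α)]
    _ ≤ ENNReal.ofReal (c * s ^ α) *
          ENNReal.ofReal ((1/((α - 1) + 1) + 1/(2 * α - (α - 1) - 1)) *
            s ^ ((α - 1) + 1 - 2 * α)) :=
        mul_le_mul_right (C1L hd hdp hs) _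
    _ = ENNReal.ofReal (c * (1/α + 1/α)) := by
        rw [← ENNReal.ofReal_mul (by positivity : (0:ℝ) ≤ c * s ^ α)]
        congr 1
        have h1 : (α - 1) + 1 = α := by ring
        have h2 : 2 * α - (α - 1) - 1 = α := by ring
        rw [h1, h2, show α - 2 * α = -α from by ring]
        have h4 : s ^ α * s ^ (-α) = 1 := by
          rw [← Real.rpow_add hs]
          norm_num
        calc c * s ^ α * ((1/α + 1/α) * s ^ (-α))
            = c * (1/α + 1/α) * (s ^ α * s ^ (-α)) := by ring
          _ = c * (1/α + 1/α) := by rw [h4]; ring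

theorem stmt_18' (n : ℕ) (hn : 1 ≤ n) (α : ℝ) (hα : 0 < α) :
    ∃ C : ℝ, 0 < C ∧ ∀ s : ℝ, 0 < s →
      (∀ z : EuclideanSpace ℝ (Fin n), z ≠ 0 →
        (∫⁻ t in Ioi (0 : ℝ),
            ENNReal.ofReal
              ((s * t) ^ α *
                |weylDeriv α
                  (fun τ => weylDeriv α (fun σ => heatKernel n (σ + τ) z) s) t| / t)) ≤
          ENNReal.ofReal (C / ‖z‖ ^ n)) ∧
      ((∫⁻ (z : EuclideanSpace ℝ (Fin n)), ∫⁻ t in Ioi (0 : ℝ),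
          ENNReal.ofReal
            ((s * t) ^ α *
              |weylDeriv α
                (fun τ => weylDeriv α (fun σ => heatKernel n (σ + τ) z) s) t| / t)) ≤
        ENNReal.ofReal C) := by
  obtain ⟨C₁, hC₁, hbd₁⟩ := Hbound_i n hn hα
  obtain ⟨C₂, hC₂, hbd₂⟩ := Hbound_ii n hn hα
  obtain ⟨C₃, hC₃, hbd₃⟩ := Jz_bound n hn hα
  have hK₃ : (0:ℝ) < 1/α + 1/α := by positivity
  refine ⟨C₁ * (1/α + 1/α) + C₂ * C₃ * (1/α + 1/α) + 1, by positivity, ?_⟩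
  intro s hs
  constructor
  · -- part (i)
    intro z hz
    have hz0 : 0 < ‖z‖ := norm_pos_iff.mpr hz
    have hzn : (0:ℝ) < ‖z‖ ^ n := by positivity
    have hmono : ∫⁻ t in Ioi (0 : ℝ), ENNReal.ofReal
        ((s * t) ^ α * |weylDeriv α
          (fun τ => weylDeriv α (fun σ => heatKernel n (σ + τ) z) s) t| / t)
        ≤ ∫⁻ t in Ioi (0:ℝ), ENNReal.ofReal
            (s ^ α * t ^ (α - 1) * ((C₁ * (‖z‖ ^ n)⁻¹) * (s + t) ^ (-(2 * α)))) := by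
      refine lintegral_mono_ae ?_
      filter_upwards [ae_restrict_mem measurableSet_Ioi] with t ht
      have ht0 : (0:ℝ) < t := ht
      have hst : (0:ℝ) < s + t := by linarith
      refine ENNReal.ofReal_le_ofReal ?_
      rw [double_weyl_eq n α z s t, st_alg hs ht0]
      have h1 := hbd₁ z hz (s + t) hst
      calc s ^ α * t ^ (α - 1) *
            |weylDeriv α (weylDeriv α (fun u => heatKernel n u z)) (s + t)|
          ≤ s ^ α * t ^ (α - 1) * (C₁ * (‖z‖ ^ n)⁻¹ * (s + t) ^ (-(2 * α))) := by
            refine mul_le_mul_of_nonneg_left h1 ?_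
            positivity
        _ = s ^ α * t ^ (α - 1) * ((C₁ * (‖z‖ ^ n)⁻¹) * (s + t) ^ (-(2 * α))) := by ring
    refine hmono.trans ?_
    refine (t_integral_bound hα hs (C₁ * (‖z‖ ^ n)⁻¹) (by positivity)).trans ?_
    refine ENNReal.ofReal_le_ofReal ?_
    rw [div_eq_mul_inv]
    calc C₁ * (‖z‖ ^ n)⁻¹ * (1/α + 1/α) = (C₁ * (1/α + 1/α)) * (‖z‖ ^ n)⁻¹ := by ring
      _ ≤ (C₁ * (1/α + 1/α) + C₂ * C₃ * (1/α + 1/α) + 1) * (‖z‖ ^ n)⁻¹ := by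
          refine mul_le_mul_of_nonneg_right ?_ (by positivity)
          nlinarith [mul_pos (mul_pos hC₂ hC₃) hK₃]
  · -- part (ii)
    set E := EuclideanSpace ℝ (Fin n)
    set Q : ℝ := -(n:ℝ)/2 - ((⌊α⌋₊ + 1 + (⌊α⌋₊ + 1) : ℕ) : ℝ) with hQ
    set J : E → ℝ → ℝ≥0∞ := fun z u => ∫⁻ w in Ioi (0:ℝ), ∫⁻ v in Ioi (0:ℝ),
      ENNReal.ofReal (w ^ dal α * (v ^ dal α *
        ((u + w + v) ^ Q * Real.exp (-(‖z‖ ^ 2 / (8 * (u + w + v))))))) with hJ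
    set B : E → ℝ → ℝ≥0∞ := fun z t =>
      ENNReal.ofReal (C₂ * (s ^ α * t ^ (α - 1))) * J z (s + t) with hB
    -- measurability of B
    have hg3 : Measurable (fun q : ((E × ℝ) × ℝ) × ℝ =>
        ENNReal.ofReal ((q.1.2) ^ dal α * ((q.2) ^ dal α *
          ((s + q.1.1.2 + q.1.2 + q.2) ^ Q *
            Real.exp (-(‖q.1.1.1‖ ^ 2 / (8 * (s + q.1.1.2 + q.1.2 + q.2)))))))) := by
      fun_prop
    have hg2 : Measurable (fun q : (E × ℝ) × ℝ => ∫⁻ v in Ioi (0:ℝ),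
        ENNReal.ofReal ((q.2) ^ dal α * (v ^ dal α *
          ((s + q.1.2 + q.2 + v) ^ Q *
            Real.exp (-(‖q.1.1‖ ^ 2 / (8 * (s + q.1.2 + q.2 + v)))))))) :=
      Measurable.lintegral_prod_right' hg3
    have hJmeas : Measurable (fun p : E × ℝ => J p.1 (s + p.2)) :=
      Measurable.lintegral_prod_right' hg2
    have hBmeas : Measurable (fun p : E × ℝ => B p.1 p.2) := by
      refine Measurable.mul ?_ hJmeas
      fun_prop
    -- pointwise bound
    have hmono : ∫⁻ (z : E), ∫⁻ t in Ioi (0 : ℝ), ENNReal.ofReal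
        ((s * t) ^ α * |weylDeriv α
          (fun τ => weylDeriv α (fun σ => heatKernel n (σ + τ) z) s) t| / t)
        ≤ ∫⁻ (z : E), ∫⁻ t in Ioi (0:ℝ), B z t := by
      refine lintegral_mono fun z => ?_
      refine lintegral_mono_ae ?_
      filter_upwards [ae_restrict_mem measurableSet_Ioi] with t ht
      have ht0 : (0:ℝ) < t := ht
      have hst : (0:ℝ) < s + t := by linarith
      have h2 := hbd₂ z (s + t) hst
      calc ENNReal.ofReal ((s * t) ^ α * |weylDeriv α
            (fun τ => weylDeriv α (fun σ => heatKernel n (σ + τ) z) s) t| / t)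
          = ENNReal.ofReal (s ^ α * t ^ (α - 1) *
              |weylDeriv α (weylDeriv α (fun u => heatKernel n u z)) (s + t)|) := by
            rw [double_weyl_eq n α z s t, st_alg hs ht0]
        _ = ENNReal.ofReal (s ^ α * t ^ (α - 1)) *
              ENNReal.ofReal (|weylDeriv α (weylDeriv α (fun u => heatKernel n u z)) (s + t)|) :=
            ENNReal.ofReal_mul (by positivity)
        _ ≤ ENNReal.ofReal (s ^ α * t ^ (α - 1)) * (ENNReal.ofReal C₂ * J z (s + t)) :=
            mul_le_mul_right h2 _
        _ = B z t := by
            simp only [hB]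
            rw [ENNReal.ofReal_mul hC₂.le]
            ring
    refine hmono.trans ?_
    have hswap : ∫⁻ (z : E), ∫⁻ t in Ioi (0:ℝ), B z t
        = ∫⁻ t in Ioi (0:ℝ), ∫⁻ (z : E), B z t :=
      lintegral_lintegral_swap hBmeas.aemeasurable
    rw [hswap]
    have hzint : ∀ t : ℝ, 0 < t → ∫⁻ (z : E), B z t
        ≤ ENNReal.ofReal (s ^ α * t ^ (α - 1) * ((C₂ * C₃) * (s + t) ^ (-(2 * α)))) := by
      intro t ht0
      have hst : (0:ℝ) < s + t := by linarith
      calc ∫⁻ (z : E), B z t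
          = ENNReal.ofReal (C₂ * (s ^ α * t ^ (α - 1))) * ∫⁻ (z : E), J z (s + t) :=
            lintegral_const_mul' _ _ ENNReal.ofReal_ne_top
        _ ≤ ENNReal.ofReal (C₂ * (s ^ α * t ^ (α - 1))) *
              ENNReal.ofReal (C₃ * (s + t) ^ (-(2 * α))) :=
            mul_le_mul_right (hbd₃ (s + t) hst) _
        _ ≤ ENNReal.ofReal (s ^ α * t ^ (α - 1) * ((C₂ * C₃) * (s + t) ^ (-(2 * α)))) := by
            rw [← ENNReal.ofReal_mul (by positivity)]
            refine ENNReal.ofReal_le_ofReal (le_of_eq ?_)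
            ring
    have hfin : ∫⁻ t in Ioi (0:ℝ), ∫⁻ (z : E), B z t
        ≤ ∫⁻ t in Ioi (0:ℝ), ENNReal.ofReal
            (s ^ α * t ^ (α - 1) * ((C₂ * C₃) * (s + t) ^ (-(2 * α)))) := by
      refine lintegral_mono_ae ?_
      filter_upwards [ae_restrict_mem measurableSet_Ioi] with t ht
      exact hzint t ht
    refine hfin.trans ?_
    refine (t_integral_bound hα hs (C₂ * C₃) (by positivity)).trans ?_
    refine ENNReal.ofReal_le_ofReal ?_
    nlinarith [mul_pos hC₁ hK₃]

end S18

/-- uniform estimates for the iterated fractional Weyl derivatives of the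
heat kernel `(s,t) ↦ W_{s+t}(z)`. -/
theorem stmt_18 (n : ℕ) (hn : 1 ≤ n) (α : ℝ) (hα : 0 < α) :
    ∃ C : ℝ, 0 < C ∧ ∀ s : ℝ, 0 < s →
      (∀ z : EuclideanSpace ℝ (Fin n), z ≠ 0 →
        (∫⁻ t in Ioi (0 : ℝ),
            ENNReal.ofReal
              ((s * t) ^ α *
                |weylDeriv α
                  (fun τ => weylDeriv α (fun σ => heatKernel n (σ + τ) z) s) t| / t)) ≤
          ENNReal.ofReal (C / ‖z‖ ^ n)) ∧
      ((∫⁻ (z : EuclideanSpace ℝ (Fin n)), ∫⁻ t in Ioi (0 : ℝ),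
          ENNReal.ofReal
            ((s * t) ^ α *
              |weylDeriv α
                (fun τ => weylDeriv α (fun σ => heatKernel n (σ + τ) z) s) t| / t)) ≤
        ENNReal.ofReal C) :=
  S18.stmt_18' n hn α hα
end
end
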